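/- arXiv:2411.19256 — 9 statements merged into one kernel-verified Lean document; each statement's English description precedes it below -/
import Mathlib

section
/- For every k ∈ ℕ one has q(x^{k+1}) + δ(1 − p_k)(γ_k/2)‖x^{k+1} − x^k‖² ≤ Φ_{k+1} ≤ Φ_k − δ p_k (γ_k/2)‖x^{k+1} − x^k‖²; in particular, the sequence (Φ_k) is monotonically nonincreasing. -/
open Filter Topology Set Metric Pointwise RealInnerProductSpace

theorem stmt0
    {X : Type*} [NormedAddCommGroup X] [InnerProductSpace ℝ X] [FiniteDimensional ℝ X]
    (f : X → ℝ) (g : X → EReal)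
    (hf : ContDiff ℝ 1 f)
    (hg_lsc : LowerSemicontinuous g)
    (hg_proper : ∃ y, g y ≠ ⊤)
    (hq_bddbelow : ∃ c : ℝ, ∀ y, g y ≠ ⊤ → (c : EReal) ≤ (f y : EReal) + g y)
    (hg_affine : ∃ (b : X) (c : ℝ), ∀ y, ((⟪b, y⟫ + c : ℝ) : EReal) ≤ g y)
    (hgrad_lip : LocallyLipschitz (fun y => gradient f y))
    (τ γmin γmax δ pmin : ℝ)
    (hτ : 1 < τ) (hγmin : 0 < γmin) (hγminmax : γmin ≤ γmax)
    (hδ : δ ∈ Set.Ioo (0:ℝ) 1) (hpmin : 4/5 ≤ pmin) (hpmin1 : pmin ≤ 1)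
    (p : ℕ → ℝ) (hp : ∀ k, p k ∈ Set.Icc pmin 1)
    (x : ℕ → X) (γ : ℕ → ℝ) (Φ : ℕ → ℝ) (qx : ℕ → ℝ)
    (hdom : ∀ k, g (x k) ≠ ⊤)
    (hqx : ∀ k, (qx k : EReal) = (f (x k) : EReal) + g (x k))
    (hγlb : ∀ k, γmin ≤ γ k)
    (hΦ0 : Φ 0 = qx 0)
    (hΦrec : ∀ k, Φ (k + 1) = (1 - p k) * Φ k + p k * qx (k + 1))
    (hstep : ∀ k, ∀ y : X,
      ((f (x k) + ⟪gradient f (x k), x (k + 1) - x k⟫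
          + γ k / 2 * ‖x (k + 1) - x k‖ ^ 2 : ℝ) : EReal) + g (x (k + 1))
        ≤ ((f (x k) + ⟪gradient f (x k), y - x k⟫
          + γ k / 2 * ‖y - x k‖ ^ 2 : ℝ) : EReal) + g y)
    (haccept : ∀ k, qx (k + 1) ≤ Φ k - δ * γ k / 2 * ‖x (k + 1) - x k‖ ^ 2)
    (htrial : ∀ k, γmax < γ k → ∃ xh : X,
      (∀ y : X, ((f (x k) + ⟪gradient f (x k), xh - x k⟫
          + (γ k / τ) / 2 * ‖xh - x k‖ ^ 2 : ℝ) : EReal) + g xh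
        ≤ ((f (x k) + ⟪gradient f (x k), y - x k⟫
          + (γ k / τ) / 2 * ‖y - x k‖ ^ 2 : ℝ) : EReal) + g y)
      ∧ ((Φ k - δ * γ k / (2 * τ) * ‖xh - x k‖ ^ 2 : ℝ) : EReal) < (f xh : EReal) + g xh) :
    (∀ k : ℕ, qx (k + 1) + δ * (1 - p k) * (γ k / 2) * ‖x (k + 1) - x k‖ ^ 2 ≤ Φ (k + 1)
      ∧ Φ (k + 1) ≤ Φ k - δ * p k * (γ k / 2) * ‖x (k + 1) - x k‖ ^ 2)
    ∧ Antitone Φ := by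
  have main : ∀ k : ℕ, qx (k + 1) + δ * (1 - p k) * (γ k / 2) * ‖x (k + 1) - x k‖ ^ 2 ≤ Φ (k + 1)
      ∧ Φ (k + 1) ≤ Φ k - δ * p k * (γ k / 2) * ‖x (k + 1) - x k‖ ^ 2 := by
    intro k
    have h1 := haccept k
    have h2 := hΦrec k
    have hpk := hp k
    have hd : (0:ℝ) ≤ ‖x (k + 1) - x k‖ ^ 2 := by positivity
    have hγ : 0 < γ k := lt_of_lt_of_le hγmin (hγlb k)
    have hδ0 : 0 < δ := hδ.1
    have hp1 : p k ≤ 1 := hpk.2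
    have hp0 : 4/5 ≤ p k := le_trans hpmin hpk.1
    constructor
    · nlinarith [mul_nonneg (mul_nonneg hδ0.le (sub_nonneg.mpr hp1))
        (mul_nonneg (by linarith : (0:ℝ) ≤ γ k / 2) hd),
        mul_le_mul_of_nonneg_left h1 (sub_nonneg.mpr hp1)]
    · nlinarith [mul_le_mul_of_nonneg_left h1 (by linarith : (0:ℝ) ≤ p k)]
  refine ⟨main, antitone_nat_of_succ_le fun k => ?_⟩
  have h := (main k).2
  have hd : (0:ℝ) ≤ ‖x (k + 1) - x k‖ ^ 2 := by positivity
  have hγ : 0 < γ k := lt_of_lt_of_le hγmin (hγlb k)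
  have hp0 : 4/5 ≤ p k := le_trans hpmin (hp k).1
  nlinarith [mul_nonneg (mul_nonneg (mul_nonneg hδ.1.le (by linarith : (0:ℝ) ≤ p k))
    (by linarith : (0:ℝ) ≤ γ k / 2)) hd]
end

section
/- Both real sequences (q(x^k)) and (Φ_k) converge to one and the same finite value q_* satisfying q_* ≥ inf_{x ∈ dom g} q(x). -/
open Filter Topology Set Metric Pointwise RealInnerProductSpace

theorem stmt3
    {X : Type*} [NormedAddCommGroup X] [InnerProductSpace ℝ X] [FiniteDimensional ℝ X]
    (f : X → ℝ) (g : X → EReal)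
    (hf : ContDiff ℝ 1 f)
    (hg_lsc : LowerSemicontinuous g)
    (hg_proper : ∃ y, g y ≠ ⊤)
    (hq_bddbelow : ∃ c : ℝ, ∀ y, g y ≠ ⊤ → (c : EReal) ≤ (f y : EReal) + g y)
    (hg_affine : ∃ (b : X) (c : ℝ), ∀ y, ((⟪b, y⟫ + c : ℝ) : EReal) ≤ g y)
    (hgrad_lip : LocallyLipschitz (fun y => gradient f y))
    (τ γmin γmax δ pmin : ℝ)
    (hτ : 1 < τ) (hγmin : 0 < γmin) (hγminmax : γmin ≤ γmax)
    (hδ : δ ∈ Set.Ioo (0:ℝ) 1) (hpmin : 4/5 ≤ pmin) (hpmin1 : pmin ≤ 1)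
    (p : ℕ → ℝ) (hp : ∀ k, p k ∈ Set.Icc pmin 1)
    (x : ℕ → X) (γ : ℕ → ℝ) (Φ : ℕ → ℝ) (qx : ℕ → ℝ)
    (hdom : ∀ k, g (x k) ≠ ⊤)
    (hqx : ∀ k, (qx k : EReal) = (f (x k) : EReal) + g (x k))
    (hγlb : ∀ k, γmin ≤ γ k)
    (hΦ0 : Φ 0 = qx 0)
    (hΦrec : ∀ k, Φ (k + 1) = (1 - p k) * Φ k + p k * qx (k + 1))
    (hstep : ∀ k, ∀ y : X,
      ((f (x k) + ⟪gradient f (x k), x (k + 1) - x k⟫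
          + γ k / 2 * ‖x (k + 1) - x k‖ ^ 2 : ℝ) : EReal) + g (x (k + 1))
        ≤ ((f (x k) + ⟪gradient f (x k), y - x k⟫
          + γ k / 2 * ‖y - x k‖ ^ 2 : ℝ) : EReal) + g y)
    (haccept : ∀ k, qx (k + 1) ≤ Φ k - δ * γ k / 2 * ‖x (k + 1) - x k‖ ^ 2)
    (htrial : ∀ k, γmax < γ k → ∃ xh : X,
      (∀ y : X, ((f (x k) + ⟪gradient f (x k), xh - x k⟫
          + (γ k / τ) / 2 * ‖xh - x k‖ ^ 2 : ℝ) : EReal) + g xh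
        ≤ ((f (x k) + ⟪gradient f (x k), y - x k⟫
          + (γ k / τ) / 2 * ‖y - x k‖ ^ 2 : ℝ) : EReal) + g y)
      ∧ ((Φ k - δ * γ k / (2 * τ) * ‖xh - x k‖ ^ 2 : ℝ) : EReal) < (f xh : EReal) + g xh) :
    ∃ qstar : ℝ,
      Filter.Tendsto qx Filter.atTop (nhds qstar) ∧
      Filter.Tendsto Φ Filter.atTop (nhds qstar) ∧
      (⨅ y : {y : X // g y ≠ ⊤}, ((f y.1 : EReal) + g y.1)) ≤ (qstar : EReal) := by
  obtain ⟨c, hc⟩ := hq_bddbelow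
  have hp0 : ∀ k, 0 < p k := fun k => lt_of_lt_of_le (by linarith) (hp k).1
  have hqxc : ∀ k, c ≤ qx k := by
    intro k
    have := hc (x k) (hdom k)
    rw [← hqx k] at this
    exact_mod_cast this
  -- qx (k+1) ≤ Φ k
  have hqΦ : ∀ k, qx (k + 1) ≤ Φ k := by
    intro k
    have h1 := haccept k
    have h2 : 0 ≤ δ * γ k / 2 * ‖x (k + 1) - x k‖ ^ 2 := by
      have hγ : 0 < γ k := lt_of_lt_of_le hγmin (hγlb k)
      have hδ0 : 0 < δ := hδ.1
      positivity
    linarith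
  -- Φ antitone
  have hΦmono : ∀ k, Φ (k + 1) ≤ Φ k := by
    intro k
    rw [hΦrec k]
    nlinarith [hqΦ k, (hp k).2, (hp0 k).le]
  have hΦanti : Antitone Φ := antitone_nat_of_succ_le hΦmono
  -- Φ bounded below by c
  have hΦc : ∀ k, c ≤ Φ k := by
    intro k
    induction k with
    | zero => rw [hΦ0]; exact hqxc 0
    | succ n ih =>
      rw [hΦrec n]
      nlinarith [hqxc (n + 1), (hp n).2, (hp0 n).le]
  have hbdd : BddBelow (Set.range Φ) := ⟨c, by rintro _ ⟨k, rfl⟩; exact hΦc k⟩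
  set qstar := ⨅ k, Φ k with hqs
  have hΦtend : Tendsto Φ atTop (𝓝 qstar) := tendsto_atTop_ciInf hΦanti hbdd
  -- qx (k+1) = Φ k + (Φ (k+1) - Φ k)/p k
  have hqxeq : ∀ k, qx (k + 1) = Φ k + (Φ (k + 1) - Φ k) / p k := by
    intro k
    rw [hΦrec k]
    field_simp [(hp0 k).ne']
    ring
  -- d k → 0
  have hdiff : Tendsto (fun k => Φ (k + 1) - Φ k) atTop (𝓝 0) := by
    have := (hΦtend.comp (tendsto_add_atTop_nat 1)).sub hΦtend
    rw [sub_self] at this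
    exact this
  have hpminpos : (0:ℝ) < pmin := by linarith
  have hdtend : Tendsto (fun k => (Φ (k + 1) - Φ k) / p k) atTop (𝓝 0) := by
    apply tendsto_of_tendsto_of_tendsto_of_le_of_le
      (g := fun k => (Φ (k + 1) - Φ k) / pmin) (h := fun _ => (0:ℝ))
    · simpa using hdiff.div_const pmin
    · exact tendsto_const_nhds
    · intro k
      have hn : Φ (k + 1) - Φ k ≤ 0 := by linarith [hΦmono k]
      rw [div_le_div_iff₀ hpminpos (hp0 k)]
      nlinarith [(hp k).1]
    · intro k
      have hn : Φ (k + 1) - Φ k ≤ 0 := by linarith [hΦmono k]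
      exact div_nonpos_of_nonpos_of_nonneg hn (hp0 k).le
  have hqxshift : Tendsto (fun k => qx (k + 1)) atTop (𝓝 qstar) := by
    have : Tendsto (fun k => Φ k + (Φ (k + 1) - Φ k) / p k) atTop (𝓝 (qstar + 0)) :=
      hΦtend.add hdtend
    simpa [← hqxeq] using this
  have hqxtend : Tendsto qx atTop (𝓝 qstar) :=
    (tendsto_add_atTop_iff_nat 1).mp hqxshift
  refine ⟨qstar, hqxtend, hΦtend, ?_⟩
  have hE : Tendsto (fun k => ((qx k : EReal))) atTop (𝓝 (qstar : EReal)) :=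
    (continuous_coe_real_ereal.tendsto _).comp hqxtend
  refine ge_of_tendsto' hE ?_
  intro k
  rw [hqx k]
  exact iInf_le (fun y : {y : X // g y ≠ ⊤} => ((f y.1 : EReal) + g y.1)) ⟨x k, hdom k⟩
end

section
/- The consecutive differences of the iterates vanish: lim_{k→∞} ‖x^{k+1} − x^k‖ = 0. -/
open Filter Topology Set Metric Pointwise RealInnerProductSpace

theorem stmt4
    {X : Type*} [NormedAddCommGroup X] [InnerProductSpace ℝ X] [FiniteDimensional ℝ X]
    (f : X → ℝ) (g : X → EReal)
    (hf : ContDiff ℝ 1 f)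
    (hg_lsc : LowerSemicontinuous g)
    (hg_proper : ∃ y, g y ≠ ⊤)
    (hq_bddbelow : ∃ c : ℝ, ∀ y, g y ≠ ⊤ → (c : EReal) ≤ (f y : EReal) + g y)
    (hg_affine : ∃ (b : X) (c : ℝ), ∀ y, ((⟪b, y⟫ + c : ℝ) : EReal) ≤ g y)
    (hgrad_lip : LocallyLipschitz (fun y => gradient f y))
    (τ γmin γmax δ pmin : ℝ)
    (hτ : 1 < τ) (hγmin : 0 < γmin) (hγminmax : γmin ≤ γmax)
    (hδ : δ ∈ Set.Ioo (0:ℝ) 1) (hpmin : 4/5 ≤ pmin) (hpmin1 : pmin ≤ 1)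
    (p : ℕ → ℝ) (hp : ∀ k, p k ∈ Set.Icc pmin 1)
    (x : ℕ → X) (γ : ℕ → ℝ) (Φ : ℕ → ℝ) (qx : ℕ → ℝ)
    (hdom : ∀ k, g (x k) ≠ ⊤)
    (hqx : ∀ k, (qx k : EReal) = (f (x k) : EReal) + g (x k))
    (hγlb : ∀ k, γmin ≤ γ k)
    (hΦ0 : Φ 0 = qx 0)
    (hΦrec : ∀ k, Φ (k + 1) = (1 - p k) * Φ k + p k * qx (k + 1))
    (hstep : ∀ k, ∀ y : X,
      ((f (x k) + ⟪gradient f (x k), x (k + 1) - x k⟫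
          + γ k / 2 * ‖x (k + 1) - x k‖ ^ 2 : ℝ) : EReal) + g (x (k + 1))
        ≤ ((f (x k) + ⟪gradient f (x k), y - x k⟫
          + γ k / 2 * ‖y - x k‖ ^ 2 : ℝ) : EReal) + g y)
    (haccept : ∀ k, qx (k + 1) ≤ Φ k - δ * γ k / 2 * ‖x (k + 1) - x k‖ ^ 2)
    (htrial : ∀ k, γmax < γ k → ∃ xh : X,
      (∀ y : X, ((f (x k) + ⟪gradient f (x k), xh - x k⟫
          + (γ k / τ) / 2 * ‖xh - x k‖ ^ 2 : ℝ) : EReal) + g xh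
        ≤ ((f (x k) + ⟪gradient f (x k), y - x k⟫
          + (γ k / τ) / 2 * ‖y - x k‖ ^ 2 : ℝ) : EReal) + g y)
      ∧ ((Φ k - δ * γ k / (2 * τ) * ‖xh - x k‖ ^ 2 : ℝ) : EReal) < (f xh : EReal) + g xh) :
    Filter.Tendsto (fun k => ‖x (k + 1) - x k‖) Filter.atTop (nhds 0) := by
  obtain ⟨c, hc⟩ := hq_bddbelow
  obtain ⟨hδ0, hδ1⟩ := hδ
  have hqlb : ∀ k, c ≤ qx k := by
    intro k
    have := hc (x k) (hdom k)
    rw [← hqx k] at this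
    exact_mod_cast this
  have hplb : ∀ k, pmin ≤ p k := fun k => (hp k).1
  have hpub : ∀ k, p k ≤ 1 := fun k => (hp k).2
  have hΦlb : ∀ k, c ≤ Φ k := by
    intro k
    induction k with
    | zero => rw [hΦ0]; exact hqlb 0
    | succ n ih =>
      rw [hΦrec n]
      nlinarith [hqlb (n + 1), hplb n, hpub n]
  set C : ℝ := pmin * δ * γmin / 2 with hCdef
  have hC : 0 < C := by positivity
  have key : ∀ k, Φ (k + 1) ≤ Φ k - C * ‖x (k + 1) - x k‖ ^ 2 := by
    intro k
    have h1 := haccept k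
    have h2 := hγlb k
    have h3 := sq_nonneg ‖x (k + 1) - x k‖
    have hpk0 : (0:ℝ) < p k := lt_of_lt_of_le (by linarith) (hplb k)
    have hA : δ * γmin / 2 * ‖x (k + 1) - x k‖ ^ 2 ≤ δ * γ k / 2 * ‖x (k + 1) - x k‖ ^ 2 := by
      nlinarith [mul_nonneg hδ0.le h3]
    have hB : pmin * (δ * γmin / 2 * ‖x (k + 1) - x k‖ ^ 2)
        ≤ p k * (δ * γ k / 2 * ‖x (k + 1) - x k‖ ^ 2) :=
      mul_le_mul (hplb k) hA (by positivity) hpk0.le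
    have h5 := mul_le_mul_of_nonneg_left h1 hpk0.le
    rw [hΦrec k]
    nlinarith [h5, hB]
  have hanti : Antitone Φ := antitone_nat_of_succ_le (fun n => by
    have := key n
    nlinarith [sq_nonneg ‖x (n + 1) - x n‖])
  have hbdd : BddBelow (Set.range Φ) := ⟨c, by rintro _ ⟨k, rfl⟩; exact hΦlb k⟩
  have hL : Tendsto Φ atTop (nhds (⨅ k, Φ k)) := tendsto_atTop_ciInf hanti hbdd
  have hL1 : Tendsto (fun k => Φ (k + 1)) atTop (nhds (⨅ k, Φ k)) :=
    hL.comp (tendsto_add_atTop_nat 1)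
  have hdiff : Tendsto (fun k => Φ k - Φ (k + 1)) atTop (nhds 0) := by
    have := hL.sub hL1
    simpa using this
  have hsq : Tendsto (fun k => ‖x (k + 1) - x k‖ ^ 2) atTop (nhds 0) := by
    have hub : ∀ k, ‖x (k + 1) - x k‖ ^ 2 ≤ (Φ k - Φ (k + 1)) / C := by
      intro k
      rw [le_div_iff₀ hC]
      have := key k
      nlinarith
    have htend : Tendsto (fun k => (Φ k - Φ (k + 1)) / C) atTop (nhds 0) := by
      have := hdiff.div_const C
      simpa using this
    exact squeeze_zero (fun k => sq_nonneg _) hub htend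
  have := (Real.continuous_sqrt.tendsto 0).comp hsq
  simpa [Function.comp_def, Real.sqrt_sq_eq_abs] using this
end

section
/- If (x^k)_{k ∈ K} is a subsequence of the iterates converging to some point x̄, then γ_k‖x^{k+1} − x^k‖ → 0 as k → ∞ along K. -/
open Filter Topology Set Metric Pointwise RealInnerProductSpace

lemma grad_inner_eq {X : Type*} [NormedAddCommGroup X] [InnerProductSpace ℝ X] [CompleteSpace X]
    (f : X → ℝ) (z v : X) : ⟪gradient f z, v⟫ = fderiv ℝ f z v := by
  simp [gradient, InnerProductSpace.toDual_symm_apply]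

lemma descent_lemma {X : Type*} [NormedAddCommGroup X] [InnerProductSpace ℝ X] [CompleteSpace X]
    (f : X → ℝ) (hf : ContDiff ℝ 1 f) {s : Set X} (hs : Convex ℝ s) {L : NNReal}
    (hlip : LipschitzOnWith L (fun y => gradient f y) s) {a b : X} (ha : a ∈ s) (hb : b ∈ s) :
    f b ≤ f a + ⟪gradient f a, b - a⟫ + (L : ℝ)/2 * ‖b - a‖^2 := by
  set d := b - a with hd
  have hmem : ∀ t ∈ Set.Icc (0:ℝ) 1, a + t • d ∈ s := by
    intro t ht
    have := hs ha hb (by linarith [ht.2] : (0:ℝ) ≤ 1 - t) ht.1 (by ring)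
    convert this using 1
    simp [hd]; module
  have hderiv : ∀ t : ℝ, HasDerivAt (fun t : ℝ => f (a + t • d)) (fderiv ℝ f (a + t • d) d) t := by
    intro t
    have hc : HasDerivAt (fun t : ℝ => a + t • d) d t := by
      simpa using ((hasDerivAt_id t).smul_const d).const_add a
    exact ((hf.differentiable one_ne_zero) _).hasFDerivAt.comp_hasDerivAt t hc
  have hcont : Continuous (fun t : ℝ => fderiv ℝ f (a + t • d) d) := by
    apply Continuous.clm_apply _ continuous_const
    exact (hf.continuous_fderiv one_ne_zero).comp (by continuity)
  have hftc : f b - f a = ∫ t in (0:ℝ)..1, fderiv ℝ f (a + t • d) d := by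
    rw [intervalIntegral.integral_eq_sub_of_hasDerivAt (fun t _ => hderiv t)
      (hcont.intervalIntegrable 0 1)]
    simp [hd]
  have hbound : ∀ t ∈ Set.Icc (0:ℝ) 1,
      fderiv ℝ f (a + t • d) d ≤ fderiv ℝ f a d + (L : ℝ) * t * ‖d‖^2 := by
    intro t ht
    have h1 : fderiv ℝ f (a + t • d) d - fderiv ℝ f a d
        = ⟪gradient f (a + t • d) - gradient f a, d⟫ := by
      rw [inner_sub_left, grad_inner_eq, grad_inner_eq]
    have h2 : ⟪gradient f (a + t • d) - gradient f a, d⟫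
        ≤ ‖gradient f (a + t • d) - gradient f a‖ * ‖d‖ := real_inner_le_norm _ _
    have h3 : ‖gradient f (a + t • d) - gradient f a‖ ≤ (L : ℝ) * (t * ‖d‖) := by
      have := hlip.norm_sub_le (hmem t ht) ha
      calc ‖gradient f (a + t • d) - gradient f a‖ ≤ (L : ℝ) * ‖(a + t • d) - a‖ := this
        _ = (L : ℝ) * (t * ‖d‖) := by
            rw [add_sub_cancel_left, norm_smul, Real.norm_eq_abs, abs_of_nonneg ht.1]
    nlinarith [norm_nonneg d, mul_nonneg (mul_nonneg L.2 ht.1) (sq_nonneg ‖d‖),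
      mul_le_mul_of_nonneg_right h3 (norm_nonneg d)]
  have hint : (∫ t in (0:ℝ)..1, fderiv ℝ f (a + t • d) d)
      ≤ ∫ t in (0:ℝ)..1, (fderiv ℝ f a d + (L : ℝ) * t * ‖d‖^2) := by
    apply intervalIntegral.integral_mono_on (by norm_num) (hcont.intervalIntegrable 0 1)
    · exact ((continuous_const.add ((continuous_const.mul continuous_id).mul
        continuous_const))).intervalIntegrable 0 1
    · exact hbound
  have hval : (∫ t in (0:ℝ)..1, (fderiv ℝ f a d + (L : ℝ) * t * ‖d‖^2))
      = fderiv ℝ f a d + (L : ℝ)/2 * ‖d‖^2 := by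
    have he : (fun t : ℝ => fderiv ℝ f a d + (L : ℝ) * t * ‖d‖^2)
        = fun t : ℝ => fderiv ℝ f a d + ((L : ℝ) * ‖d‖^2) * t := funext fun t => by ring
    rw [he, intervalIntegral.integral_add intervalIntegrable_const
      ((intervalIntegral.intervalIntegrable_id).const_mul _),
      intervalIntegral.integral_const_mul, integral_id]
    simp; ring
  have := hftc ▸ (hint.trans_eq hval)
  rw [grad_inner_eq]
  linarith

set_option maxHeartbeats 2000000 in
theorem stmt6
    {X : Type*} [NormedAddCommGroup X] [InnerProductSpace ℝ X] [FiniteDimensional ℝ X]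
    (f : X → ℝ) (g : X → EReal)
    (hf : ContDiff ℝ 1 f)
    (hg_lsc : LowerSemicontinuous g)
    (hg_proper : ∃ y, g y ≠ ⊤)
    (hq_bddbelow : ∃ c : ℝ, ∀ y, g y ≠ ⊤ → (c : EReal) ≤ (f y : EReal) + g y)
    (hg_affine : ∃ (b : X) (c : ℝ), ∀ y, ((⟪b, y⟫ + c : ℝ) : EReal) ≤ g y)
    (hgrad_lip : LocallyLipschitz (fun y => gradient f y))
    (τ γmin γmax δ pmin : ℝ)
    (hτ : 1 < τ) (hγmin : 0 < γmin) (hγminmax : γmin ≤ γmax)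
    (hδ : δ ∈ Set.Ioo (0:ℝ) 1) (hpmin : 4/5 ≤ pmin) (hpmin1 : pmin ≤ 1)
    (p : ℕ → ℝ) (hp : ∀ k, p k ∈ Set.Icc pmin 1)
    (x : ℕ → X) (γ : ℕ → ℝ) (Φ : ℕ → ℝ) (qx : ℕ → ℝ)
    (hdom : ∀ k, g (x k) ≠ ⊤)
    (hqx : ∀ k, (qx k : EReal) = (f (x k) : EReal) + g (x k))
    (hγlb : ∀ k, γmin ≤ γ k)
    (hΦ0 : Φ 0 = qx 0)
    (hΦrec : ∀ k, Φ (k + 1) = (1 - p k) * Φ k + p k * qx (k + 1))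
    (hstep : ∀ k, ∀ y : X,
      ((f (x k) + ⟪gradient f (x k), x (k + 1) - x k⟫
          + γ k / 2 * ‖x (k + 1) - x k‖ ^ 2 : ℝ) : EReal) + g (x (k + 1))
        ≤ ((f (x k) + ⟪gradient f (x k), y - x k⟫
          + γ k / 2 * ‖y - x k‖ ^ 2 : ℝ) : EReal) + g y)
    (haccept : ∀ k, qx (k + 1) ≤ Φ k - δ * γ k / 2 * ‖x (k + 1) - x k‖ ^ 2)
    (htrial : ∀ k, γmax < γ k → ∃ xh : X,
      (∀ y : X, ((f (x k) + ⟪gradient f (x k), xh - x k⟫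
          + (γ k / τ) / 2 * ‖xh - x k‖ ^ 2 : ℝ) : EReal) + g xh
        ≤ ((f (x k) + ⟪gradient f (x k), y - x k⟫
          + (γ k / τ) / 2 * ‖y - x k‖ ^ 2 : ℝ) : EReal) + g y)
      ∧ ((Φ k - δ * γ k / (2 * τ) * ‖xh - x k‖ ^ 2 : ℝ) : EReal) < (f xh : EReal) + g xh)
    (xbar : X) (φ : ℕ → ℕ) (hφ : StrictMono φ)
    (hconv : Filter.Tendsto (fun j => x (φ j)) Filter.atTop (nhds xbar)) :
    Filter.Tendsto (fun j => γ (φ j) * ‖x (φ j + 1) - x (φ j)‖) Filter.atTop (nhds 0) := by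
  obtain ⟨hδ0, hδ1⟩ := hδ
  obtain ⟨c, hc⟩ := hq_bddbelow
  obtain ⟨b, c₂, hbc⟩ := hg_affine
  have hτ0 : (0:ℝ) < τ := lt_trans one_pos hτ
  have hγpos : ∀ k, 0 < γ k := fun k => lt_of_lt_of_le hγmin (hγlb k)
  have hpk0 : ∀ k, 0 < p k := fun k => lt_of_lt_of_le (by linarith) (hp k).1
  have hpk1 : ∀ k, p k ≤ 1 := fun k => (hp k).2
  have hpkmin : ∀ k, pmin ≤ p k := fun k => (hp k).1
  -- g never ⊥
  have hgnb : ∀ y, g y ≠ ⊥ := by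
    intro y hy
    have := hbc y
    rw [hy] at this
    exact (EReal.coe_ne_bot _) (le_bot_iff.mp this)
  -- real values of g at iterates
  have hGx : ∀ k, g (x k) = (((g (x k)).toReal : ℝ) : EReal) :=
    fun k => (EReal.coe_toReal (hdom k) (hgnb _)).symm
  have hqreal : ∀ k, qx k = f (x k) + (g (x k)).toReal := by
    intro k
    have := hqx k
    rw [hGx k, ← EReal.coe_add] at this
    exact_mod_cast this
  have hqxle : ∀ k, c ≤ qx k := by
    intro k
    have := hc (x k) (hdom k)
    rw [← hqx k] at this
    exact_mod_cast this
  set dn : ℕ → ℝ := fun k => ‖x (k+1) - x k‖ with hdn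
  have hdnn : ∀ k, 0 ≤ dn k := fun k => norm_nonneg _
  have hΦdec : ∀ k, Φ (k+1) ≤ Φ k - p k * (δ * γ k / 2 * dn k ^ 2) := by
    intro k
    have h := haccept k
    rw [hΦrec k]
    nlinarith [hpk0 k, hpk1 k, mul_le_mul_of_nonneg_left h (hpk0 k).le]
  have hsnn : ∀ k, 0 ≤ δ * γ k / 2 * dn k ^ 2 := by
    intro k
    have := (hγpos k).le
    positivity
  have hΦanti : Antitone Φ := antitone_nat_of_succ_le fun k => by
    nlinarith [hΦdec k, hsnn k, hpk0 k]
  have hΦlb : ∀ k, c ≤ Φ k := by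
    intro k
    induction k with
    | zero => rw [hΦ0]; exact hqxle 0
    | succ n ih =>
      rw [hΦrec n]
      nlinarith [hpk0 n, hpk1 n, hqxle (n+1)]
  have hqxΦ : ∀ k, qx k ≤ Φ k := by
    intro k
    cases k with
    | zero => rw [hΦ0]
    | succ n =>
      have h := haccept n
      rw [hΦrec n]
      nlinarith [hsnn n, hpk0 n, hpk1 n]
  have hbdd : BddBelow (Set.range Φ) := ⟨c, by rintro _ ⟨k, rfl⟩; exact hΦlb k⟩
  have hΦconv : Tendsto Φ atTop (𝓝 (⨅ k, Φ k)) := tendsto_atTop_ciInf hΦanti hbdd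
  have hΦdiff : Tendsto (fun k => Φ k - Φ (k+1)) atTop (𝓝 0) := by
    have h2 : Tendsto (fun k => Φ (k+1)) atTop (𝓝 (⨅ k, Φ k)) :=
      hΦconv.comp (tendsto_add_atTop_nat 1)
    simpa using hΦconv.sub h2
  set s : ℕ → ℝ := fun k => γ k * dn k ^ 2 with hsdef
  have hstend : Tendsto s atTop (𝓝 0) := by
    have hbound : ∀ k, s k ≤ (2/(pmin*δ)) * (Φ k - Φ (k+1)) := by
      intro k
      have h1 := hΦdec k
      have h2 : pmin * (δ * γ k / 2 * dn k ^ 2) ≤ p k * (δ * γ k / 2 * dn k ^ 2) :=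
        mul_le_mul_of_nonneg_right (hpkmin k) (hsnn k)
      have h3 : pmin * (δ * γ k / 2 * dn k ^ 2) ≤ Φ k - Φ (k+1) := by linarith
      have hpd : (0:ℝ) < pmin * δ := by positivity
      have he : pmin * (δ * γ k / 2 * dn k ^ 2) = (pmin * δ)/2 * s k := by
        rw [hsdef]; ring
      rw [he] at h3
      calc s k = (2/(pmin*δ)) * ((pmin*δ)/2 * s k) := by field_simp
        _ ≤ (2/(pmin*δ)) * (Φ k - Φ (k+1)) :=
            mul_le_mul_of_nonneg_left h3 (by positivity)
    exact squeeze_zero (fun k => by have := (hγpos k).le; positivity) hbound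
      (by simpa using hΦdiff.const_mul (2/(pmin*δ)))
  -- local setup around xbar
  obtain ⟨K, t, ht, hlipK⟩ := hgrad_lip xbar
  obtain ⟨r, hr0, hrt⟩ : ∃ r > 0, closedBall xbar r ⊆ t := by
    rcases Metric.mem_nhds_iff.mp ht with ⟨ε, hε, hεt⟩
    exact ⟨ε/2, by linarith, (closedBall_subset_ball (by linarith)).trans hεt⟩
  have hlipr : LipschitzOnWith K (fun y => gradient f y) (closedBall xbar r) := hlipK.mono hrt
  have hxbar_mem : xbar ∈ closedBall xbar r := mem_closedBall_self hr0.le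
  set L := (K:ℝ) with hLdef
  have hL0 : 0 ≤ L := K.2
  set M₁ := ‖gradient f xbar‖ + L * r with hM₁
  have hM₁0 : 0 ≤ M₁ := by positivity
  have hgradbd : ∀ z ∈ closedBall xbar r, ‖gradient f z‖ ≤ M₁ := by
    intro z hz
    have h := hlipr.norm_sub_le hz hxbar_mem
    have h2 : ‖z - xbar‖ ≤ r := by
      rw [← dist_eq_norm]; exact mem_closedBall.mp hz
    have h3 := norm_sub_norm_le (gradient f z) (gradient f xbar)
    have h4 : L * ‖z - xbar‖ ≤ L * r := mul_le_mul_of_nonneg_left h2 hL0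
    simp only [hM₁]
    linarith
  obtain ⟨zmin, hzmin_mem, hzmin⟩ := (isCompact_closedBall xbar r).exists_isMinOn
    ⟨xbar, hxbar_mem⟩ (hf.continuous.continuousOn)
  set m := f zmin with hm
  set A := M₁ + ‖b‖ with hA
  have hA0 : 0 ≤ A := by positivity
  set B := |Φ 0| + |m| + ‖b‖ * (‖xbar‖ + r) + |c₂| with hB
  have hB0 : 0 ≤ B := by positivity
  set Γ := max γmax (max (τ*L/(1-δ)) (max (2*τ*(A+B)+1) (8*τ*(A+B+1)/r^2))) with hΓdef
  have key : ∀ k, x k ∈ closedBall xbar (r/2) → γ k ≤ Γ := by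
    intro k hk
    by_contra hcon
    push_neg at hcon
    have hγγmax : γmax < γ k := lt_of_le_of_lt (le_max_left _ _) hcon
    have hγLδ : τ*L/(1-δ) < γ k :=
      lt_of_le_of_lt ((le_max_left _ _).trans (le_max_right _ _)) hcon
    have hγAB : 2*τ*(A+B)+1 < γ k :=
      lt_of_le_of_lt (((le_max_left _ _).trans (le_max_right _ _)).trans (le_max_right _ _)) hcon
    have hγAB2 : 8*τ*(A+B+1)/r^2 < γ k :=
      lt_of_le_of_lt (((le_max_right _ _).trans (le_max_right _ _)).trans (le_max_right _ _)) hcon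
    obtain ⟨xh, hmod, hlt⟩ := htrial k hγγmax
    set gk := gradient f (x k) with hgk
    set dh := xh - x k with hdh
    set tn := ‖dh‖ with htn
    have htn0 : 0 ≤ tn := norm_nonneg _
    have hxk_mem : x k ∈ closedBall xbar r :=
      closedBall_subset_closedBall (by linarith) hk
    -- g xh is finite
    have h0 := hmod (x k)
    have hghtop : g xh ≠ ⊤ := by
      intro htop
      rw [htop, hGx k] at h0
      rw [EReal.add_top_of_ne_bot (EReal.coe_ne_bot _), ← EReal.coe_add] at h0
      exact (EReal.coe_ne_top _) (top_le_iff.mp h0)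
    have hGh : g xh = (((g xh).toReal : ℝ) : EReal) := (EReal.coe_toReal hghtop (hgnb _)).symm
    set Gh := (g xh).toReal with hGhdef
    set Gk := (g (x k)).toReal with hGkdef
    -- real model inequality at y = x k
    rw [hGx k, hGh, ← EReal.coe_add, ← EReal.coe_add, EReal.coe_le_coe_iff] at h0
    have hmodr : ⟪gk, dh⟫ + (γ k / τ)/2 * tn^2 + Gh ≤ Gk := by
      have hz : ⟪gk, x k - x k⟫ = 0 := by simp
      have hz2 : ‖x k - x k‖ = 0 := by simp
      rw [hz2, hz] at h0
      norm_num at h0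
      linarith
    -- real trial strict inequality
    rw [hGh, ← EReal.coe_add, EReal.coe_lt_coe_iff] at hlt
    clear h0 hmod
    -- bounds
    have hGkb : Gk ≤ Φ 0 - m := by
      have h1 : qx k = f (x k) + Gk := hqreal k
      have h2 : qx k ≤ Φ k := hqxΦ k
      have h3 : Φ k ≤ Φ 0 := hΦanti (Nat.zero_le k)
      have h4 : m ≤ f (x k) := hzmin hxk_mem
      linarith
    have hGhb : ⟪b, x k⟫ + ⟪b, dh⟫ + c₂ ≤ Gh := by
      have := hbc xh
      rw [hGh, EReal.coe_le_coe_iff] at this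
      have hxe : xh = x k + dh := by rw [hdh]; abel
      rw [hxe, inner_add_right] at this
      linarith
    have hbxk : -(‖b‖ * (‖xbar‖ + r)) ≤ ⟪b, x k⟫ := by
      have h1 := abs_real_inner_le_norm b (x k)
      have h2 : ‖x k‖ ≤ ‖xbar‖ + r := by
        have h3 : ‖x k - xbar‖ ≤ r := by
          rw [← dist_eq_norm]; exact mem_closedBall.mp hxk_mem
        have := norm_sub_norm_le (x k) xbar
        linarith
      have h4 : ‖b‖ * ‖x k‖ ≤ ‖b‖ * (‖xbar‖ + r) :=
        mul_le_mul_of_nonneg_left h2 (norm_nonneg b)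
      have := neg_abs_le (⟪b, x k⟫ : ℝ)
      linarith
    have hbdh : -(‖b‖ * tn) ≤ ⟪b, dh⟫ := by
      have h1 := abs_real_inner_le_norm b dh
      have := neg_abs_le (⟪b, dh⟫ : ℝ)
      linarith
    have hgkdh : -(M₁ * tn) ≤ ⟪gk, dh⟫ := by
      have h1 := abs_real_inner_le_norm gk dh
      have h2 : ‖gk‖ ≤ M₁ := hgradbd _ hxk_mem
      have h3 : ‖gk‖ * tn ≤ M₁ * tn := mul_le_mul_of_nonneg_right h2 htn0
      have := neg_abs_le (⟪gk, dh⟫ : ℝ)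
      linarith
    have hBlb : Φ 0 - m + ‖b‖ * (‖xbar‖ + r) - c₂ ≤ B := by
      rw [hB]
      have := le_abs_self (Φ 0)
      have := neg_abs_le m
      have := neg_abs_le c₂
      linarith
    -- quadratic inequality
    have hquad : γ k / τ / 2 * tn^2 ≤ A * tn + B := by
      rw [hA]
      nlinarith [hmodr, hGkb, hGhb, hbxk, hbdh, hgkdh, hBlb]
    have hQ : γ k * tn^2 ≤ 2*τ*(A*tn + B) := by
      have h2τ : (0:ℝ) < 2*τ := by linarith
      have := mul_le_mul_of_nonneg_left hquad h2τ.le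
      have heq : 2*τ*(γ k / τ / 2 * tn^2) = γ k * tn^2 := by field_simp
      linarith [heq ▸ this]
    have ht1 : tn ≤ 1 := by
      by_contra hh
      push_neg at hh
      have h1 : tn ≤ tn^2 := by nlinarith
      have h2 : (1:ℝ) ≤ tn^2 := by nlinarith
      have hA1 : A*tn ≤ A*tn^2 := mul_le_mul_of_nonneg_left h1 hA0
      have hB1 : B*1 ≤ B*tn^2 := mul_le_mul_of_nonneg_left h2 hB0
      have h3 : 2*τ*(A*tn+B) ≤ 2*τ*(A*tn^2+B*tn^2) :=
        mul_le_mul_of_nonneg_left (by linarith) (by linarith)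
      have h4 : (2*τ*(A+B)+1)*tn^2 ≤ γ k*tn^2 :=
        mul_le_mul_of_nonneg_right hγAB.le (sq_nonneg tn)
      nlinarith
    have hQ2 : γ k * tn^2 ≤ 2*τ*(A+B) := by
      have hAt : A*tn ≤ A*1 := mul_le_mul_of_nonneg_left ht1 hA0
      have h3 : 2*τ*(A*tn+B) ≤ 2*τ*(A+B) :=
        mul_le_mul_of_nonneg_left (by linarith) (by linarith)
      linarith
    have htr2 : tn ≤ r/2 := by
      have h2 : 8*τ*(A+B+1) < γ k * r^2 := by
        have := (div_lt_iff₀ (by positivity : (0:ℝ) < r^2)).mp hγAB2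
        linarith
      by_contra hh
      push_neg at hh
      have h3 : (r/2)*(r/2) < tn*tn :=
        mul_self_lt_mul_self (by positivity) hh
      have h4 : γ k * ((r/2)*(r/2)) < γ k * (tn*tn) :=
        mul_lt_mul_of_pos_left h3 (hγpos k)
      nlinarith
    have hxh_mem : xh ∈ closedBall xbar r := by
      rw [mem_closedBall]
      have h1 : dist xh (x k) ≤ r/2 := by
        rw [dist_eq_norm]; exact htr2
      have h2 : dist (x k) xbar ≤ r/2 := mem_closedBall.mp hk
      linarith [dist_triangle xh (x k) xbar]
    have hdesc : f xh ≤ f (x k) + ⟪gk, dh⟫ + L/2 * tn^2 := by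
      have := descent_lemma f hf (convex_closedBall xbar r) hlipr hxk_mem hxh_mem
      simpa [htn, hdh, hgk] using this
    -- contradiction
    have hcoef : τ*L < γ k * (1-δ) := by
      rw [div_lt_iff₀ (by linarith : (0:ℝ) < 1-δ)] at hγLδ
      linarith
    have hchain : Φ k - δ * γ k / (2*τ) * tn^2 <
        Φ k + (L/2 - γ k / τ / 2) * tn^2 := by
      have h1 : f xh + Gh ≤ f (x k) + Gk + (L/2 - γ k / τ / 2) * tn^2 := by nlinarith
      have h2 : f (x k) + Gk ≤ Φ k := by
        have := hqreal k; have := hqxΦ k; linarith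
      nlinarith
    have hclean : 0 < δ * γ k * tn^2 + τ * L * tn^2 - γ k * tn^2 := by
      have h2τ : (0:ℝ) < 2*τ := by linarith
      have h3 : 0 < (L/2 - γ k / τ / 2) * tn^2 + δ * γ k / (2*τ) * tn^2 := by linarith
      have heq : 2*τ*((L/2 - γ k / τ / 2) * tn^2 + δ * γ k / (2*τ) * tn^2)
          = τ * L * tn^2 - γ k * tn^2 + δ * γ k * tn^2 := by field_simp
      have h4 := mul_pos h2τ h3
      rw [heq] at h4
      linarith only [h4]
    have h5 : 0 ≤ tn^2 * (γ k * (1-δ) - τ*L) :=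
      mul_nonneg (sq_nonneg tn) (sub_pos.mpr hcoef).le
    linarith only [hclean, h5]
  -- conclusion
  have hball : ∀ᶠ j in atTop, x (φ j) ∈ closedBall xbar (r/2) :=
    hconv (closedBall_mem_nhds xbar (by positivity))
  have hstendφ : Tendsto (fun j => s (φ j)) atTop (𝓝 0) := hstend.comp hφ.tendsto_atTop
  have hsqrt : Tendsto (fun j => Real.sqrt (Γ * s (φ j))) atTop (𝓝 0) := by
    have h1 : Tendsto (fun j => Γ * s (φ j)) atTop (𝓝 0) := by
      simpa using hstendφ.const_mul Γ
    have := (Real.continuous_sqrt.tendsto 0).comp h1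
    simpa [Function.comp_def] using this
  apply squeeze_zero' (Eventually.of_forall fun j => mul_nonneg (hγpos _).le (norm_nonneg _)) _ hsqrt
  filter_upwards [hball] with j hj
  have hγΓ := key (φ j) hj
  have hsq : (γ (φ j) * ‖x (φ j + 1) - x (φ j)‖)^2 ≤ Γ * s (φ j) := by
    have he : (γ (φ j) * ‖x (φ j + 1) - x (φ j)‖)^2
        = γ (φ j) * (γ (φ j) * ‖x (φ j + 1) - x (φ j)‖^2) := by ring
    have hnn : 0 ≤ γ (φ j) * ‖x (φ j + 1) - x (φ j)‖^2 :=
      mul_nonneg (hγpos _).le (sq_nonneg _)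
    rw [he]
    exact mul_le_mul_of_nonneg_right hγΓ hnn
  have hnn2 : 0 ≤ γ (φ j) * ‖x (φ j + 1) - x (φ j)‖ :=
    mul_nonneg (hγpos _).le (norm_nonneg _)
  have hΓs : 0 ≤ Γ * s (φ j) := le_trans (sq_nonneg _) hsq
  exact (Real.le_sqrt hnn2 hΓs).mpr hsq
end

section
/- Let x̄ be an accumulation point of the iterate sequence (x^k). Then for every ρ > 0 there exists a constant γ̄_ρ > 0 (depending on ρ) such that γ_k ≤ γ̄_ρ holds for every k ∈ ℕ with ‖x^k − x̄‖ ≤ ρ. -/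
set_option maxHeartbeats 1000000

open Filter Topology Set Metric Pointwise RealInnerProductSpace

theorem locLip_compact_bound {E F : Type*} [MetricSpace E] [PseudoMetricSpace F]
    {f : E → F} (hf : LocallyLipschitz f) {K : Set E} (hK : IsCompact K) :
    ∃ C : ℝ, 0 ≤ C ∧ ∀ u ∈ K, ∀ v ∈ K, dist (f u) (f v) ≤ C * dist u v := by
  rcases K.eq_empty_or_nonempty with hKe | hKne
  · exact ⟨0, le_rfl, by simp [hKe]⟩
  have H : ∀ x : E, ∃ (c : NNReal) (r : ℝ), 0 < r ∧ LipschitzOnWith c f (ball x r) := by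
    intro x
    obtain ⟨c, t, ht, hl⟩ := hf x
    obtain ⟨r, hr, hsub⟩ := Metric.mem_nhds_iff.1 ht
    exact ⟨c, r, hr, hl.mono hsub⟩
  choose c r hr hl using H
  obtain ⟨t, htK, hcover⟩ := hK.elim_nhds_subcover (fun x => ball x (r x / 2))
      (fun x _ => Metric.ball_mem_nhds x (by linarith [hr x]))
  have htne : t.Nonempty := by
    obtain ⟨z, hz⟩ := hKne
    obtain ⟨i, hi, _⟩ := Set.mem_iUnion₂.1 (hcover hz)
    exact ⟨i, hi⟩
  set δ := t.inf' htne (fun x => r x / 2) with hδdef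
  have hδpos : 0 < δ := (Finset.lt_inf'_iff htne).2 fun b _ => by linarith [hr b]
  obtain ⟨M, hM⟩ := (Metric.isBounded_iff).1
    (hK.image_of_continuousOn hf.continuous.continuousOn).isBounded
  have hM0 : 0 ≤ M := by
    obtain ⟨z, hz⟩ := hKne
    have := hM (Set.mem_image_of_mem f hz) (Set.mem_image_of_mem f hz)
    simpa using this
  set Cmax := t.sup' htne fun x => (c x : ℝ) with hCdef
  refine ⟨max (max Cmax (M / δ)) 0, le_max_right _ _, ?_⟩
  intro u hu v hv
  by_cases hd : dist u v < δ
  · obtain ⟨i, hi, hui⟩ := Set.mem_iUnion₂.1 (hcover hu)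
    have hδle : δ ≤ r i / 2 := Finset.inf'_le _ hi
    have hui' : u ∈ ball i (r i) := by
      rw [mem_ball] at hui ⊢; linarith [hr i]
    have hvi : v ∈ ball i (r i) := by
      rw [mem_ball] at hui ⊢
      have : dist v i ≤ dist v u + dist u i := dist_triangle _ _ _
      rw [dist_comm v u] at this
      linarith
    have hle := (lipschitzOnWith_iff_dist_le_mul.1 (hl i)) u hui' v hvi
    have hci : (c i : ℝ) ≤ Cmax := Finset.le_sup' (fun x => (c x : ℝ)) hi
    calc dist (f u) (f v) ≤ (c i : ℝ) * dist u v := hle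
      _ ≤ max (max Cmax (M / δ)) 0 * dist u v := by
          apply mul_le_mul_of_nonneg_right _ dist_nonneg
          exact le_trans hci (le_trans (le_max_left _ _) (le_max_left _ _))
  · push_neg at hd
    have h1 : dist (f u) (f v) ≤ M := hM (Set.mem_image_of_mem f hu) (Set.mem_image_of_mem f hv)
    have h2 : M ≤ (M / δ) * dist u v := by
      rw [div_mul_eq_mul_div, le_div_iff₀ hδpos]
      exact mul_le_mul_of_nonneg_left hd hM0
    refine h1.trans (h2.trans ?_)
    apply mul_le_mul_of_nonneg_right _ dist_nonneg
    exact le_trans (le_max_right _ _) (le_max_left _ _)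

theorem stmt7
    {X : Type*} [NormedAddCommGroup X] [InnerProductSpace ℝ X] [FiniteDimensional ℝ X]
    (f : X → ℝ) (g : X → EReal)
    (hf : ContDiff ℝ 1 f)
    (hg_lsc : LowerSemicontinuous g)
    (hg_proper : ∃ y, g y ≠ ⊤)
    (hq_bddbelow : ∃ c : ℝ, ∀ y, g y ≠ ⊤ → (c : EReal) ≤ (f y : EReal) + g y)
    (hg_affine : ∃ (b : X) (c : ℝ), ∀ y, ((⟪b, y⟫ + c : ℝ) : EReal) ≤ g y)
    (hgrad_lip : LocallyLipschitz (fun y => gradient f y))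
    (τ γmin γmax δ pmin : ℝ)
    (hτ : 1 < τ) (hγmin : 0 < γmin) (hγminmax : γmin ≤ γmax)
    (hδ : δ ∈ Set.Ioo (0:ℝ) 1) (hpmin : 4/5 ≤ pmin) (hpmin1 : pmin ≤ 1)
    (p : ℕ → ℝ) (hp : ∀ k, p k ∈ Set.Icc pmin 1)
    (x : ℕ → X) (γ : ℕ → ℝ) (Φ : ℕ → ℝ) (qx : ℕ → ℝ)
    (hdom : ∀ k, g (x k) ≠ ⊤)
    (hqx : ∀ k, (qx k : EReal) = (f (x k) : EReal) + g (x k))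
    (hγlb : ∀ k, γmin ≤ γ k)
    (hΦ0 : Φ 0 = qx 0)
    (hΦrec : ∀ k, Φ (k + 1) = (1 - p k) * Φ k + p k * qx (k + 1))
    (hstep : ∀ k, ∀ y : X,
      ((f (x k) + ⟪gradient f (x k), x (k + 1) - x k⟫
          + γ k / 2 * ‖x (k + 1) - x k‖ ^ 2 : ℝ) : EReal) + g (x (k + 1))
        ≤ ((f (x k) + ⟪gradient f (x k), y - x k⟫
          + γ k / 2 * ‖y - x k‖ ^ 2 : ℝ) : EReal) + g y)
    (haccept : ∀ k, qx (k + 1) ≤ Φ k - δ * γ k / 2 * ‖x (k + 1) - x k‖ ^ 2)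
    (htrial : ∀ k, γmax < γ k → ∃ xh : X,
      (∀ y : X, ((f (x k) + ⟪gradient f (x k), xh - x k⟫
          + (γ k / τ) / 2 * ‖xh - x k‖ ^ 2 : ℝ) : EReal) + g xh
        ≤ ((f (x k) + ⟪gradient f (x k), y - x k⟫
          + (γ k / τ) / 2 * ‖y - x k‖ ^ 2 : ℝ) : EReal) + g y)
      ∧ ((Φ k - δ * γ k / (2 * τ) * ‖xh - x k‖ ^ 2 : ℝ) : EReal) < (f xh : EReal) + g xh)
    (xbar : X) (hacc : MapClusterPt xbar Filter.atTop x) :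
    ∀ ρ > (0:ℝ), ∃ γbar > (0:ℝ), ∀ k : ℕ, ‖x k - xbar‖ ≤ ρ → γ k ≤ γbar := by
  have hτ0 : (0:ℝ) < τ := lt_trans one_pos hτ
  have hγpos : ∀ k, 0 < γ k := fun k => lt_of_lt_of_le hγmin (hγlb k)
  have hδ0 := hδ.1
  have hδ1 := hδ.2
  obtain ⟨b, cA, haff⟩ := hg_affine
  have hgne_bot : ∀ z : X, g z ≠ ⊥ := fun z h =>
    absurd (h ▸ haff z) (not_le.2 (EReal.bot_lt_coe _))
  have hgval : ∀ z : X, g z ≠ ⊤ → g z = ((g z).toReal : EReal) := fun z hz =>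
    (EReal.coe_toReal hz (hgne_bot z)).symm
  have hGkeq : ∀ k, qx k = f (x k) + (g (x k)).toReal := by
    intro k
    have h := hqx k
    rw [hgval _ (hdom k), ← EReal.coe_add] at h
    exact_mod_cast h
  have key : ∀ k, qx k ≤ Φ k ∧ Φ k ≤ Φ 0 := by
    intro k
    induction k with
    | zero => exact ⟨le_of_eq hΦ0.symm, le_rfl⟩
    | succ n ih =>
      have ha := haccept n
      have hγn := hγpos n
      have hnn : 0 ≤ δ * γ n / 2 * ‖x (n+1) - x n‖^2 := by positivity
      have h1 : qx (n+1) ≤ Φ n := by linarith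
      have hp0 : 0 ≤ p n := le_trans (by linarith) (hp n).1
      have hp1 : p n ≤ 1 := (hp n).2
      constructor
      · rw [hΦrec n]; nlinarith
      · rw [hΦrec n]; nlinarith [ih.2]
  intro ρ hρ
  have hB2c : IsCompact (closedBall xbar (2*ρ)) := isCompact_closedBall _ _
  obtain ⟨L, hL0, hLip⟩ := locLip_compact_bound hgrad_lip hB2c
  obtain ⟨M, hM⟩ := hB2c.exists_bound_of_continuousOn hgrad_lip.continuous.continuousOn
  obtain ⟨Fb, hFb⟩ := hB2c.exists_bound_of_continuousOn hf.continuous.continuousOn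
  set M' := max M 0 with hM'def
  have hM'0 : 0 ≤ M' := le_max_right _ _
  set A := Φ 0 + Fb + ‖b‖*(‖xbar‖+ρ) + |cA| with hAdef
  set Bc := ‖b‖ + M' with hBcdef
  have hBc0 : 0 ≤ Bc := add_nonneg (norm_nonneg _) hM'0
  set Γ1 := (2/ρ)*(max A 0/ρ + Bc) with hΓ1def
  set Γ2 := 2*L/(1-δ) with hΓ2def
  clear_value M' A Bc Γ1 Γ2
  refine ⟨max 1 (max γmax (τ*(max Γ1 Γ2))), lt_of_lt_of_le one_pos (le_max_left _ _), ?_⟩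
  intro k hxk
  by_contra hcon
  push_neg at hcon
  have hγmaxlt : γmax < γ k :=
    lt_of_le_of_lt (le_trans (le_max_left _ _) (le_max_right 1 _)) hcon
  obtain ⟨xh, hmodel, hstrict⟩ := htrial k hγmaxlt
  have hγ' : max Γ1 Γ2 < γ k / τ := by
    rw [lt_div_iff₀ hτ0]
    calc max Γ1 Γ2 * τ = τ * max Γ1 Γ2 := mul_comm _ _
      _ ≤ max 1 (max γmax (τ*(max Γ1 Γ2))) := le_trans (le_max_right _ _) (le_max_right _ _)
      _ < γ k := hcon
  have hγ'pos : 0 < γ k / τ := div_pos (hγpos k) hτ0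
  -- memberships
  have hxkB : x k ∈ closedBall xbar (2*ρ) := by
    rw [mem_closedBall, dist_eq_norm]; linarith
  -- extract real inequalities
  have h1 := hmodel (x k)
  have e0 : f (x k) + ⟪gradient f (x k), x k - x k⟫ + (γ k / τ)/2 * ‖x k - x k‖^2 = f (x k) := by
    simp
  rw [e0, hgval _ (hdom k)] at h1
  have hghtop : g xh ≠ ⊤ := by
    intro hgh
    rw [hgh, EReal.add_top_of_ne_bot (EReal.coe_ne_bot _), ← EReal.coe_add] at h1
    exact absurd h1 (not_le.2 (EReal.coe_lt_top _))
  rw [hgval _ hghtop, ← EReal.coe_add, ← EReal.coe_add] at h1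
  have h1R := EReal.coe_le_coe_iff.1 h1
  rw [hgval _ hghtop, ← EReal.coe_add] at hstrict
  have hSR := EReal.coe_lt_coe_iff.1 hstrict
  have haffR : ⟪b, xh⟫ + cA ≤ (g xh).toReal := by
    have h := haff xh; rw [hgval _ hghtop] at h; exact EReal.coe_le_coe_iff.1 h
  set d := ‖xh - x k‖ with hddef
  clear_value d
  have hd0 : 0 ≤ d := by rw [hddef]; exact norm_nonneg _
  -- bounds
  have hMM' : M ≤ M' := by rw [hM'def]; exact le_max_left _ _
  have hMk : ‖gradient f (x k)‖ ≤ M' := le_trans (by simpa using hM _ hxkB) hMM'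
  have hFk : |f (x k)| ≤ Fb := by simpa [Real.norm_eq_abs] using hFb _ hxkB
  have hip : |⟪gradient f (x k), xh - x k⟫| ≤ M' * d := by
    refine le_trans (abs_real_inner_le_norm _ _) ?_
    rw [hddef]
    exact mul_le_mul_of_nonneg_right hMk (norm_nonneg _)
  have hxh_norm : ‖xh‖ ≤ ‖x k‖ + d := by
    have hxx : xh = x k + (xh - x k) := by abel
    rw [hddef]
    calc ‖xh‖ = ‖x k + (xh - x k)‖ := by rw [← hxx]
      _ ≤ ‖x k‖ + ‖xh - x k‖ := norm_add_le _ _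
  have hxk_norm : ‖x k‖ ≤ ‖xbar‖ + ρ := by
    have hxx : xbar + (x k - xbar) = x k := by abel
    calc ‖x k‖ = ‖xbar + (x k - xbar)‖ := by rw [hxx]
      _ ≤ ‖xbar‖ + ‖x k - xbar‖ := norm_add_le _ _
      _ ≤ ‖xbar‖ + ρ := by linarith
  have hbxh : -(‖b‖ * (‖xbar‖ + ρ + d)) ≤ ⟪b, xh⟫ := by
    have h2 := abs_real_inner_le_norm b xh
    have h3 : ‖b‖ * ‖xh‖ ≤ ‖b‖ * (‖xbar‖ + ρ + d) := by
      apply mul_le_mul_of_nonneg_left _ (norm_nonneg b)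
      linarith
    have := neg_abs_le ⟪b, xh⟫
    linarith [abs_le.1 h2]
  have hGk_ub : (g (x k)).toReal ≤ Φ 0 + Fb := by
    have h4 := hGkeq k
    have h5 := (key k).1
    have h6 := (key k).2
    have := abs_le.1 hFk
    linarith
  -- quadratic bound on d
  have hquad : (γ k / τ)/2 * d^2 ≤ A + Bc * d := by
    have h7 := neg_abs_le ⟪gradient f (x k), xh - x k⟫
    have h8 := abs_le.1 hip
    have h9 : cA ≥ -|cA| := neg_abs_le cA
    rw [hAdef, hBcdef]
    linarith [h1R, haffR, hbxh, hGk_ub]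
  have hdρ : d ≤ ρ := by
    by_contra hdc
    push_neg at hdc
    have hΓ1lt : Γ1 < γ k / τ := lt_of_le_of_lt (le_max_left _ _) hγ'
    have hρd : 0 < ρ * d := mul_pos hρ (lt_trans hρ hdc)
    have c1 : γ k/τ * (ρ*d) < γ k/τ * d^2 := by
      nlinarith [mul_pos (mul_pos hγ'pos (lt_trans hρ hdc)) (sub_pos.2 hdc)]
    have c3 : 2*A + 2*Bc*d ≤ Γ1 * (ρ*d) := by
      have e1 : Γ1 * (ρ*d) = 2*(max A 0)*(d/ρ) + 2*Bc*d := by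
        rw [hΓ1def]; field_simp
      have e2 : (1:ℝ) ≤ d/ρ := le_of_lt ((one_lt_div hρ).2 hdc)
      have e3 : A ≤ max A 0 := le_max_left _ _
      have e4 : (0:ℝ) ≤ max A 0 := le_max_right _ _
      nlinarith [mul_nonneg e4 (sub_nonneg.2 e2)]
    linarith [hquad, mul_lt_mul_of_pos_right hΓ1lt hρd, c1, c3]
  -- xh in the big ball
  have hxhB : xh ∈ closedBall xbar (2*ρ) := by
    rw [mem_closedBall, dist_eq_norm]
    have := dist_triangle xh (x k) xbar
    simp only [dist_eq_norm] at this
    rw [← hddef] at this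
    linarith
  -- descent lemma along the segment
  have hdf : Differentiable ℝ f := hf.differentiable one_ne_zero
  have hsub : segment ℝ (x k) xh ⊆ closedBall xbar (2*ρ) :=
    (convex_closedBall _ _).segment_subset hxkB hxhB
  have hseg_norm : ∀ y ∈ segment ℝ (x k) xh, ‖y - x k‖ ≤ d := by
    rintro y ⟨a, bb, ha, hb, hab, rfl⟩
    have e5 : a • x k + bb • xh - x k = bb • (xh - x k) := by
      have : a = 1 - bb := by linarith
      rw [this]; module
    rw [e5, norm_smul, Real.norm_eq_abs, abs_of_nonneg hb, ← hddef]
    nlinarith [mul_nonneg (sub_nonneg.2 (by linarith : bb ≤ 1)) hd0]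
  have hderiv : ∀ y ∈ segment ℝ (x k) xh,
      HasFDerivWithinAt (fun z => f z - (fderiv ℝ f (x k)) z)
        (fderiv ℝ f y - fderiv ℝ f (x k)) (segment ℝ (x k) xh) y := fun y _ =>
    (((hdf y).hasFDerivAt).sub ((fderiv ℝ f (x k)).hasFDerivAt)).hasFDerivWithinAt
  have hbound : ∀ y ∈ segment ℝ (x k) xh, ‖fderiv ℝ f y - fderiv ℝ f (x k)‖ ≤ L * d := by
    intro y hy
    have h8 : ‖gradient f y - gradient f (x k)‖ ≤ L * ‖y - x k‖ := by
      have := hLip y (hsub hy) (x k) hxkB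
      simp only [dist_eq_norm] at this
      exact this
    have h9 : ‖gradient f y - gradient f (x k)‖ = ‖fderiv ℝ f y - fderiv ℝ f (x k)‖ := by
      rw [gradient, gradient, ← LinearIsometryEquiv.map_sub, LinearIsometryEquiv.norm_map]
    rw [h9] at h8
    exact le_trans h8 (mul_le_mul_of_nonneg_left (hseg_norm y hy) hL0)
  have hMVT := Convex.norm_image_sub_le_of_norm_hasFDerivWithin_le hderiv hbound
    (convex_segment _ _) (left_mem_segment ℝ (x k) xh) (right_mem_segment ℝ (x k) xh)
  have hfderiv_inner : ∀ v : X, (fderiv ℝ f (x k)) v = ⟪gradient f (x k), v⟫ := by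
    intro v
    rw [gradient, InnerProductSpace.toDual_symm_apply]
  have hdesc : f xh ≤ f (x k) + ⟪gradient f (x k), xh - x k⟫ + L * d^2 := by
    have h10 : ‖(f xh - (fderiv ℝ f (x k)) xh) - (f (x k) - (fderiv ℝ f (x k)) (x k))‖
        ≤ L * d * ‖xh - x k‖ := hMVT
    rw [← hddef, Real.norm_eq_abs] at h10
    have h11 := (abs_le.1 h10).2
    have h12 : (fderiv ℝ f (x k)) xh - (fderiv ℝ f (x k)) (x k)
        = ⟪gradient f (x k), xh - x k⟫ := by
      rw [← hfderiv_inner, map_sub]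
    linarith [h11, h12.ge, h12.le]
  -- final contradiction
  have hΓ2lt : Γ2 < γ k / τ := lt_of_le_of_lt (le_max_right _ _) hγ'
  have h1δ : 0 < 1 - δ := by linarith
  have hLle : 2*L < (γ k/τ)*(1-δ) := by
    rw [hΓ2def, div_lt_iff₀ h1δ] at hΓ2lt
    linarith
  have hrw : δ * γ k / (2*τ) = δ * (γ k/τ) / 2 := by ring
  rw [hrw] at hSR
  have F4 := hGkeq k
  have F5 := (key k).1
  have F7 : 0 ≤ ((γ k/τ)*(1-δ) - 2*L) * d^2 :=
    mul_nonneg (by linarith) (sq_nonneg d)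
  linarith [hSR, hdesc, h1R, F4, F5, F7]
end

section
/- If (x^k)_{k ∈ K} is a subsequence of the iterates converging to some point x̄, then g(x^{k+1}) → g(x̄) as k → ∞ along K (in particular x̄ ∈ dom g). -/
open Filter Topology Set Metric Pointwise RealInnerProductSpace

lemma aux_descent {X : Type*} [NormedAddCommGroup X] [InnerProductSpace ℝ X] [CompleteSpace X]
    (f : X → ℝ) (hf : ContDiff ℝ 1 f) (L : ℝ) (hL : 0 ≤ L) (s : Set X) (hs : Convex ℝ s)
    (hlip : ∀ u ∈ s, ∀ v ∈ s, ‖gradient f u - gradient f v‖ ≤ L * ‖u - v‖)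
    {u v : X} (hu : u ∈ s) (hv : v ∈ s) :
    f v ≤ f u + ⟪gradient f u, v - u⟫ + L * ‖v - u‖ ^ 2 := by
  have hfd : ∀ z, DifferentiableAt ℝ f z := fun z => (hf.differentiable one_ne_zero) z
  have hgrad : ∀ z, fderiv ℝ f z = InnerProductSpace.toDual ℝ X (gradient f z) := fun z => by
    rw [gradient]; exact ((InnerProductSpace.toDual ℝ X).apply_symm_apply _).symm
  set h : X → ℝ := fun y => f y - fderiv ℝ f u y with hh
  have hts : segment ℝ u v ⊆ s := hs.segment_subset hu hv
  have hdiff : ∀ z ∈ segment ℝ u v, DifferentiableAt ℝ h z := fun z _ =>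
    (hfd z).sub ((fderiv ℝ f u).differentiableAt)
  have hbound : ∀ z ∈ segment ℝ u v, ‖fderiv ℝ h z‖ ≤ L * ‖v - u‖ := by
    intro z hz
    have h1 : fderiv ℝ h z = fderiv ℝ f z - fderiv ℝ f u := by
      have := ((hfd z).hasFDerivAt.sub ((fderiv ℝ f u).hasFDerivAt)).fderiv
      exact this
    have h3 : ‖z - u‖ ≤ ‖v - u‖ := by
      have h4 := dist_add_dist_of_mem_segment hz
      have h5 : (0:ℝ) ≤ dist z v := dist_nonneg
      have h6 : dist u z ≤ dist u v := by linarith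
      rw [dist_eq_norm, dist_eq_norm] at h6
      calc ‖z - u‖ = ‖u - z‖ := (norm_sub_rev u z).symm
        _ ≤ ‖u - v‖ := h6
        _ = ‖v - u‖ := norm_sub_rev u v
    calc ‖fderiv ℝ h z‖ = ‖gradient f z - gradient f u‖ := by
          rw [h1, hgrad z, hgrad u, ← map_sub, LinearIsometryEquiv.norm_map]
      _ ≤ L * ‖z - u‖ := hlip z (hts hz) u hu
      _ ≤ L * ‖v - u‖ := by nlinarith
  have hmv := Convex.norm_image_sub_le_of_norm_fderiv_le hdiff hbound (convex_segment u v)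
    (left_mem_segment ℝ u v) (right_mem_segment ℝ u v)
  have hval : h v - h u = f v - f u - fderiv ℝ f u (v - u) := by
    simp only [hh, map_sub]; ring
  have hinner : fderiv ℝ f u (v - u) = ⟪gradient f u, v - u⟫ := by
    rw [gradient, InnerProductSpace.toDual_symm_apply]
  rw [Real.norm_eq_abs, hval, hinner] at hmv
  have := abs_le.mp hmv
  nlinarith [this.2, sq_nonneg ‖v - u‖]

set_option maxHeartbeats 2000000 in
theorem stmt8
    {X : Type*} [NormedAddCommGroup X] [InnerProductSpace ℝ X] [FiniteDimensional ℝ X]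
    (f : X → ℝ) (g : X → EReal)
    (hf : ContDiff ℝ 1 f)
    (hg_lsc : LowerSemicontinuous g)
    (hg_proper : ∃ y, g y ≠ ⊤)
    (hq_bddbelow : ∃ c : ℝ, ∀ y, g y ≠ ⊤ → (c : EReal) ≤ (f y : EReal) + g y)
    (hg_affine : ∃ (b : X) (c : ℝ), ∀ y, ((⟪b, y⟫ + c : ℝ) : EReal) ≤ g y)
    (hgrad_lip : LocallyLipschitz (fun y => gradient f y))
    (τ γmin γmax δ pmin : ℝ)
    (hτ : 1 < τ) (hγmin : 0 < γmin) (hγminmax : γmin ≤ γmax)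
    (hδ : δ ∈ Set.Ioo (0:ℝ) 1) (hpmin : 4/5 ≤ pmin) (hpmin1 : pmin ≤ 1)
    (p : ℕ → ℝ) (hp : ∀ k, p k ∈ Set.Icc pmin 1)
    (x : ℕ → X) (γ : ℕ → ℝ) (Φ : ℕ → ℝ) (qx : ℕ → ℝ)
    (hdom : ∀ k, g (x k) ≠ ⊤)
    (hqx : ∀ k, (qx k : EReal) = (f (x k) : EReal) + g (x k))
    (hγlb : ∀ k, γmin ≤ γ k)
    (hΦ0 : Φ 0 = qx 0)
    (hΦrec : ∀ k, Φ (k + 1) = (1 - p k) * Φ k + p k * qx (k + 1))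
    (hstep : ∀ k, ∀ y : X,
      ((f (x k) + ⟪gradient f (x k), x (k + 1) - x k⟫
          + γ k / 2 * ‖x (k + 1) - x k‖ ^ 2 : ℝ) : EReal) + g (x (k + 1))
        ≤ ((f (x k) + ⟪gradient f (x k), y - x k⟫
          + γ k / 2 * ‖y - x k‖ ^ 2 : ℝ) : EReal) + g y)
    (haccept : ∀ k, qx (k + 1) ≤ Φ k - δ * γ k / 2 * ‖x (k + 1) - x k‖ ^ 2)
    (htrial : ∀ k, γmax < γ k → ∃ xh : X,
      (∀ y : X, ((f (x k) + ⟪gradient f (x k), xh - x k⟫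
          + (γ k / τ) / 2 * ‖xh - x k‖ ^ 2 : ℝ) : EReal) + g xh
        ≤ ((f (x k) + ⟪gradient f (x k), y - x k⟫
          + (γ k / τ) / 2 * ‖y - x k‖ ^ 2 : ℝ) : EReal) + g y)
      ∧ ((Φ k - δ * γ k / (2 * τ) * ‖xh - x k‖ ^ 2 : ℝ) : EReal) < (f xh : EReal) + g xh)
    (xbar : X) (φ : ℕ → ℕ) (hφ : StrictMono φ)
    (hconv : Filter.Tendsto (fun j => x (φ j)) Filter.atTop (nhds xbar)) :
    Filter.Tendsto (fun j => g (x (φ j + 1))) Filter.atTop (nhds (g xbar)) ∧ g xbar ≠ ⊤ := by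
  obtain ⟨b, cb, hb⟩ := hg_affine
  obtain ⟨c0, hc0⟩ := hq_bddbelow
  obtain ⟨hδ0, hδ1⟩ := hδ
  have hτ0 : (0:ℝ) < τ := by linarith
  have h1δ : (0:ℝ) < 1 - δ := by linarith
  have hγpos : ∀ k, 0 < γ k := fun k => lt_of_lt_of_le hγmin (hγlb k)
  have hgbot : ∀ y, g y ≠ ⊥ := by
    intro y hy
    have h1 := hb y
    rw [hy, le_bot_iff] at h1
    exact EReal.coe_ne_bot _ h1
  set G : ℕ → ℝ := fun k => (g (x k)).toReal with hGdef
  have hG : ∀ k, ((G k : ℝ) : EReal) = g (x k) := fun k => EReal.coe_toReal (hdom k) (hgbot _)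
  have hqxG : ∀ k, qx k = f (x k) + G k := by
    intro k
    have h1 := hqx k
    rw [← hG k, ← EReal.coe_add] at h1
    exact_mod_cast h1
  have hqlb : ∀ k, c0 ≤ qx k := by
    intro k
    have h1 := hc0 (x k) (hdom k)
    rw [← hqx k] at h1
    exact_mod_cast h1
  have hppos : ∀ k, 0 < p k := fun k => lt_of_lt_of_le (by linarith) (hp k).1
  have hp1 : ∀ k, p k ≤ 1 := fun k => (hp k).2
  have hD0 : ∀ k, 0 ≤ δ * γ k / 2 * ‖x (k + 1) - x k‖ ^ 2 := by
    intro k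
    have := hγpos k
    positivity
  have hqxΦ' : ∀ k, qx (k + 1) ≤ Φ k := fun k => by linarith [haccept k, hD0 k]
  have hqxΦ : ∀ k, qx k ≤ Φ k := by
    intro k
    cases k with
    | zero => rw [hΦ0]
    | succ n =>
      have h1 := hqxΦ' n
      rw [hΦrec n]
      nlinarith [hppos n, hp1 n]
  have hΦdec : ∀ k, Φ (k + 1) ≤ Φ k - 4/5 * (δ * γ k / 2 * ‖x (k + 1) - x k‖ ^ 2) := by
    intro k
    rw [hΦrec k]
    have h1 := haccept k
    have h2 := hD0 k
    have h3 : 4/5 ≤ p k := le_trans hpmin (hp k).1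
    nlinarith [hp1 k]
  have hΦmono : Antitone Φ := antitone_nat_of_succ_le fun k => by linarith [hΦdec k, hD0 k]
  have hΦlb : ∀ k, c0 ≤ Φ k := by
    intro k
    induction k with
    | zero => rw [hΦ0]; exact hqlb 0
    | succ n ih => rw [hΦrec n]; nlinarith [hqlb (n + 1), hppos n, hp1 n]
  obtain ⟨l, hl⟩ : ∃ l, Tendsto Φ atTop (𝓝 l) :=
    ⟨_, tendsto_atTop_ciInf hΦmono ⟨c0, fun y hy => by obtain ⟨k, rfl⟩ := hy; exact hΦlb k⟩⟩
  have hl' : Tendsto (fun k => Φ (k + 1)) atTop (𝓝 l) := hl.comp (tendsto_add_atTop_nat 1)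
  have hdiff0 : Tendsto (fun k => Φ k - Φ (k + 1)) atTop (𝓝 0) := by
    simpa using hl.sub hl'
  have hγΔ : Tendsto (fun k => γ k * ‖x (k + 1) - x k‖ ^ 2) atTop (𝓝 0) := by
    have hub : ∀ k, γ k * ‖x (k + 1) - x k‖ ^ 2 ≤ 5 / (2 * δ) * (Φ k - Φ (k + 1)) := by
      intro k
      have h1 := hΦdec k
      have h2 : 2 * δ / 5 * (γ k * ‖x (k + 1) - x k‖ ^ 2) ≤ Φ k - Φ (k + 1) := by nlinarith
      calc γ k * ‖x (k + 1) - x k‖ ^ 2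
          = 5 / (2 * δ) * (2 * δ / 5 * (γ k * ‖x (k + 1) - x k‖ ^ 2)) := by field_simp
        _ ≤ 5 / (2 * δ) * (Φ k - Φ (k + 1)) :=
            mul_le_mul_of_nonneg_left h2 (by positivity)
    have hlb : ∀ k, 0 ≤ γ k * ‖x (k + 1) - x k‖ ^ 2 := fun k => by
      have := hγpos k; positivity
    exact squeeze_zero hlb hub (by simpa using hdiff0.const_mul (5 / (2 * δ)))
  have hΔ0 : Tendsto (fun k => ‖x (k + 1) - x k‖) atTop (𝓝 0) := by
    have hsq : Tendsto (fun k => Real.sqrt (γ k * ‖x (k + 1) - x k‖ ^ 2 / γmin)) atTop (𝓝 0) := by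
      have h1 := hγΔ.div_const γmin
      have h2 := (Real.continuous_sqrt.tendsto 0).comp (by simpa using h1)
      simpa [Function.comp_def] using h2
    apply squeeze_zero (fun k => norm_nonneg _) (fun k => ?_) hsq
    have hle : ‖x (k + 1) - x k‖ ^ 2 ≤ γ k * ‖x (k + 1) - x k‖ ^ 2 / γmin := by
      rw [le_div_iff₀ hγmin]
      nlinarith [mul_nonneg (sub_nonneg.mpr (hγlb k)) (sq_nonneg ‖x (k + 1) - x k‖)]
    calc ‖x (k + 1) - x k‖ = Real.sqrt (‖x (k + 1) - x k‖ ^ 2) :=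
          (Real.sqrt_sq (norm_nonneg _)).symm
      _ ≤ Real.sqrt (γ k * ‖x (k + 1) - x k‖ ^ 2 / γmin) := Real.sqrt_le_sqrt hle
  have hφtop : Tendsto φ atTop atTop := hφ.tendsto_atTop
  have hconv1 : Tendsto (fun j => x (φ j + 1)) atTop (𝓝 xbar) := by
    have h1 : Tendsto (fun j => x (φ j + 1) - x (φ j)) atTop (𝓝 0) := by
      rw [tendsto_zero_iff_norm_tendsto_zero]
      exact hΔ0.comp hφtop
    have h2 := h1.add hconv
    simpa using h2
  have hfd : ∀ z, DifferentiableAt ℝ f z := fun z => (hf.differentiable one_ne_zero) z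
  have hgradcont : Continuous (fun z => gradient f z) := by
    have h1 : Continuous (fun z => fderiv ℝ f z) := hf.continuous_fderiv one_ne_zero
    exact ((InnerProductSpace.toDual ℝ X).symm.continuous.comp h1 : _)
  have hinnerfd : ∀ z w, ⟪gradient f z, w⟫ = fderiv ℝ f z w := fun z w => by
    rw [gradient, InnerProductSpace.toDual_symm_apply]
  obtain ⟨K, t, ht, hKlip⟩ := hgrad_lip xbar
  obtain ⟨r, hr0, hrt⟩ := Metric.mem_nhds_iff.mp ht
  obtain ⟨L, hLdef⟩ : ∃ L : ℝ, L = (K : ℝ) := ⟨_, rfl⟩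
  have hL0 : 0 ≤ L := hLdef ▸ K.coe_nonneg
  have hlipball : ∀ u ∈ ball xbar r, ∀ v ∈ ball xbar r,
      ‖gradient f u - gradient f v‖ ≤ L * ‖u - v‖ := by
    intro u hu v hv
    have h1 := hKlip.dist_le_mul u (hrt hu) v (hrt hv)
    rw [dist_eq_norm, dist_eq_norm] at h1
    rw [hLdef]
    exact h1
  obtain ⟨B, hBdef⟩ : ∃ B : ℝ, B = ‖gradient f xbar‖ + 1 := ⟨_, rfl⟩
  have hB0 : 0 < B := by rw [hBdef]; positivity
  obtain ⟨M, hMdef⟩ : ∃ M : ℝ, M = Φ 0 - f xbar + 1 := ⟨_, rfl⟩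
  obtain ⟨R, hRdef⟩ : ∃ R : ℝ, R = ‖xbar‖ + r := ⟨_, rfl⟩
  obtain ⟨A, hAdef⟩ : ∃ A : ℝ, A = |M - cb + ‖b‖ * R| + 1 := ⟨_, rfl⟩
  have hA0 : 0 < A := by rw [hAdef]; positivity
  have hA1 : M - cb + ‖b‖ * R ≤ A := le_trans (le_abs_self _) (by rw [hAdef]; linarith [abs_nonneg (M - cb + ‖b‖ * R)])
  obtain ⟨C, hCdef⟩ : ∃ C : ℝ, C = ‖b‖ + B := ⟨_, rfl⟩
  have hC0 : 0 ≤ C := by rw [hCdef]; positivity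
  obtain ⟨Γ, hΓdef⟩ : ∃ Γ : ℝ,
      Γ = γmax + (8 * τ * A / r ^ 2 + 4 * τ * C / r) + 2 * τ * L / (1 - δ) + 1 := ⟨_, rfl⟩
  have hΓ1 : 0 ≤ 8 * τ * A / r ^ 2 + 4 * τ * C / r := by positivity
  have hΓ2 : 0 ≤ 2 * τ * L / (1 - δ) := by positivity
  have hΓγmax : γmax < Γ := by rw [hΓdef]; linarith
  -- key per-iterate bound on γ
  have hkey : ∀ k, x k ∈ ball xbar (r / 2) → G k ≤ M → ‖gradient f (x k)‖ ≤ B → γ k ≤ Γ := by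
    intro k hxk hGk hgk
    by_contra hcon
    push_neg at hcon
    obtain ⟨xh, hmin, hfail⟩ := htrial k (lt_trans hΓγmax hcon)
    have hgxh_top : g xh ≠ ⊤ := by
      intro htop
      have h1 := hmin (x k)
      rw [htop, ← hG k] at h1
      have h2 : ((f (x k) + ⟪gradient f (x k), xh - x k⟫
          + γ k / τ / 2 * ‖xh - x k‖ ^ 2 : ℝ) : EReal) + ⊤ = ⊤ := by
        exact EReal.add_top_of_ne_bot (EReal.coe_ne_bot _)
      rw [h2, top_le_iff, ← EReal.coe_add] at h1
      exact EReal.coe_ne_top _ h1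
    obtain ⟨Gh, hGhdef⟩ : ∃ Gh : ℝ, Gh = (g xh).toReal := ⟨_, rfl⟩
    have hGh : ((Gh : ℝ) : EReal) = g xh := hGhdef ▸ EReal.coe_toReal hgxh_top (hgbot xh)
    have hfail' : Φ k - δ * γ k / (2 * τ) * ‖xh - x k‖ ^ 2 < f xh + Gh := by
      have h1 := hfail
      rw [← hGh, ← EReal.coe_add, EReal.coe_lt_coe_iff] at h1
      exact h1
    have hmin' : ⟪gradient f (x k), xh - x k⟫ + γ k / τ / 2 * ‖xh - x k‖ ^ 2 + Gh ≤ G k := by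
      have h1 := hmin (x k)
      rw [← hG k, ← hGh, ← EReal.coe_add, ← EReal.coe_add, EReal.coe_le_coe_iff] at h1
      simp only [sub_self, inner_zero_right, norm_zero, ne_eq, OfNat.ofNat_ne_zero,
        not_false_eq_true, zero_pow, mul_zero, add_zero] at h1
      linarith [h1]
    have hGhlb : ⟪b, xh⟫ + cb ≤ Gh := by
      have h1 := hb xh
      rw [← hGh] at h1
      exact_mod_cast h1
    clear hmin hfail hstep htrial hqx hg_lsc hb hc0
    have hxknorm : ‖x k‖ ≤ ‖xbar‖ + r / 2 := by
      have h1 : ‖x k - xbar‖ < r / 2 := by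
        rw [← dist_eq_norm]; exact mem_ball.mp hxk
      calc ‖x k‖ = ‖x k - xbar + xbar‖ := by rw [sub_add_cancel]
        _ ≤ ‖x k - xbar‖ + ‖xbar‖ := norm_add_le _ _
        _ ≤ ‖xbar‖ + r / 2 := by linarith
    have hxhnorm : ‖xh‖ ≤ R + ‖xh - x k‖ := by
      calc ‖xh‖ = ‖xh - x k + x k‖ := by rw [sub_add_cancel]
        _ ≤ ‖xh - x k‖ + ‖x k‖ := norm_add_le _ _
        _ ≤ R + ‖xh - x k‖ := by rw [hRdef]; linarith
    have hinner_b : -(‖b‖ * (R + ‖xh - x k‖)) ≤ ⟪b, xh⟫ := by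
      have h1 : |⟪b, xh⟫| ≤ ‖b‖ * ‖xh‖ := abs_real_inner_le_norm b xh
      have h2 : ‖b‖ * ‖xh‖ ≤ ‖b‖ * (R + ‖xh - x k‖) :=
        mul_le_mul_of_nonneg_left hxhnorm (norm_nonneg b)
      have h3 := neg_abs_le ⟪b, xh⟫
      linarith
    have hinner_g : -(B * ‖xh - x k‖) ≤ ⟪gradient f (x k), xh - x k⟫ := by
      have h1 := abs_real_inner_le_norm (gradient f (x k)) (xh - x k)
      have h2 : ‖gradient f (x k)‖ * ‖xh - x k‖ ≤ B * ‖xh - x k‖ :=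
        mul_le_mul_of_nonneg_right hgk (norm_nonneg _)
      have h3 := neg_abs_le ⟪gradient f (x k), xh - x k⟫
      linarith
    have hquad : γ k / τ / 2 * ‖xh - x k‖ ^ 2 ≤ A + C * ‖xh - x k‖ := by
      have h1 : γ k / τ / 2 * ‖xh - x k‖ ^ 2 ≤ G k - Gh - ⟪gradient f (x k), xh - x k⟫ := by
        linarith
      have h2 : Gh ≥ -(‖b‖ * (R + ‖xh - x k‖)) + cb := by linarith
      have h3 : ‖b‖ * (R + ‖xh - x k‖) = ‖b‖ * R + ‖b‖ * ‖xh - x k‖ := by ring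
      have h4 : C * ‖xh - x k‖ = ‖b‖ * ‖xh - x k‖ + B * ‖xh - x k‖ := by
        rw [hCdef]; ring
      linarith [h1, h2, hinner_g, hGk, hA1, h3, h4]
    have hnd0 : 0 ≤ ‖xh - x k‖ := norm_nonneg _
    have hnd_small : ‖xh - x k‖ < r / 2 := by
      by_contra hnd
      push_neg at hnd
      have hndpos : 0 < ‖xh - x k‖ := lt_of_lt_of_le (by linarith) hnd
      have e1 : γ k * ‖xh - x k‖ ^ 2 ≤ 2 * τ * A + 2 * τ * C * ‖xh - x k‖ := by
        have h0 := mul_le_mul_of_nonneg_left hquad (by positivity : (0:ℝ) ≤ 2 * τ)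
        calc γ k * ‖xh - x k‖ ^ 2 = 2 * τ * (γ k / τ / 2 * ‖xh - x k‖ ^ 2) := by
              field_simp
          _ ≤ 2 * τ * (A + C * ‖xh - x k‖) := h0
          _ = 2 * τ * A + 2 * τ * C * ‖xh - x k‖ := by ring
      have e2 : 2 * τ * A ≤ 4 * τ * A / r * ‖xh - x k‖ := by
        have h1 : 4 * τ * A / r * ‖xh - x k‖ ≥ 4 * τ * A / r * (r / 2) :=
          mul_le_mul_of_nonneg_left hnd (by positivity)
        have h2 : 4 * τ * A / r * (r / 2) = 2 * τ * A := by field_simp; ring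
        linarith
      have e4 : γ k * ‖xh - x k‖ ≤ 4 * τ * A / r + 2 * τ * C := by
        have e3 : γ k * ‖xh - x k‖ * ‖xh - x k‖ ≤ (4 * τ * A / r + 2 * τ * C) * ‖xh - x k‖ := by
          have r1 : γ k * ‖xh - x k‖ * ‖xh - x k‖ = γ k * ‖xh - x k‖ ^ 2 := by ring
          have r2 : (4 * τ * A / r + 2 * τ * C) * ‖xh - x k‖
              = 4 * τ * A / r * ‖xh - x k‖ + 2 * τ * C * ‖xh - x k‖ := by ring
          linarith [e1, e2]
        exact le_of_mul_le_mul_right e3 hndpos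
      have e5 : γ k * (r / 2) ≤ 4 * τ * A / r + 2 * τ * C := by
        have := mul_le_mul_of_nonneg_left hnd (le_of_lt (hγpos k))
        linarith
      have e6 : γ k ≤ 8 * τ * A / r ^ 2 + 4 * τ * C / r := by
        rw [show (8 : ℝ) * τ * A / r ^ 2 + 4 * τ * C / r
            = (4 * τ * A / r + 2 * τ * C) / (r / 2) by field_simp; ring]
        rw [le_div_iff₀ (by positivity)]
        linarith
      have hcon2 : Γ < γ k := hcon
      rw [hΓdef] at hcon2
      have hγmax0 : 0 < γmax := lt_of_lt_of_le hγmin hγminmax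
      linarith
    have hxk' : x k ∈ ball xbar r := by
      apply ball_subset_ball (by linarith : r / 2 ≤ r) hxk
    have hxh_ball : xh ∈ ball xbar r := by
      rw [mem_ball, dist_eq_norm]
      have h1 : xh - xbar = (xh - x k) + (x k - xbar) := by abel
      have h2 : ‖x k - xbar‖ < r / 2 := by
        rw [← dist_eq_norm]; exact mem_ball.mp hxk
      calc ‖xh - xbar‖ = ‖(xh - x k) + (x k - xbar)‖ := by rw [h1]
        _ ≤ ‖xh - x k‖ + ‖x k - xbar‖ := norm_add_le _ _
        _ < r := by linarith
    have hdesc := aux_descent f hf L hL0 (ball xbar r) (convex_ball xbar r) hlipball hxk' hxh_ball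
    have hq := hqxΦ k
    have hqxk := hqxG k
    have hpos : 0 < γ k * (1 - δ) - 2 * τ * L := by
      have h1 : 2 * τ * L / (1 - δ) < γ k := by
        have hcon2 := hcon
        rw [hΓdef] at hcon2
        have hγmax0 : 0 < γmax := lt_of_lt_of_le hγmin hγminmax
        linarith
      rw [div_lt_iff₀ h1δ] at h1
      linarith
    have hc1 : f xh + Gh ≤ f (x k) + G k - γ k / τ / 2 * ‖xh - x k‖ ^ 2 + L * ‖xh - x k‖ ^ 2 := by
      linarith [hdesc, hmin']
    have hc2 : Φ k - δ * γ k / (2 * τ) * ‖xh - x k‖ ^ 2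
        < Φ k - γ k / τ / 2 * ‖xh - x k‖ ^ 2 + L * ‖xh - x k‖ ^ 2 := by
      apply lt_of_lt_of_le hfail'
      linarith
    have hid : γ k / τ / 2 * ‖xh - x k‖ ^ 2 - δ * γ k / (2 * τ) * ‖xh - x k‖ ^ 2
        = (γ k * (1 - δ)) / (2 * τ) * ‖xh - x k‖ ^ 2 := by
      field_simp
    have hc4 : (γ k * (1 - δ)) / (2 * τ) * ‖xh - x k‖ ^ 2 < L * ‖xh - x k‖ ^ 2 := by
      linarith [hc2, hid]
    have hc5 : L < γ k * (1 - δ) / (2 * τ) := by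
      rw [lt_div_iff₀ (by positivity)]
      linarith
    have hc6 : L * ‖xh - x k‖ ^ 2 ≤ γ k * (1 - δ) / (2 * τ) * ‖xh - x k‖ ^ 2 :=
      mul_le_mul_of_nonneg_right hc5.le (sq_nonneg _)
    linarith [hc4, hc6]
  -- eventual facts along the subsequence
  have hEball : ∀ᶠ j in atTop, x (φ j) ∈ ball xbar (r / 2) :=
    hconv (ball_mem_nhds xbar (by positivity))
  have hEf : ∀ᶠ j in atTop, f xbar - 1 ≤ f (x (φ j)) := by
    have h1 : Tendsto (fun j => f (x (φ j))) atTop (𝓝 (f xbar)) :=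
      (hf.continuous.tendsto xbar).comp hconv
    exact h1.eventually (eventually_ge_nhds (by linarith))
  have hEg : ∀ᶠ j in atTop, ‖gradient f (x (φ j))‖ ≤ B := by
    have h1 : Tendsto (fun j => ‖gradient f (x (φ j))‖) atTop (𝓝 ‖gradient f xbar‖) :=
      ((hgradcont.norm).tendsto xbar).comp hconv
    exact h1.eventually (eventually_le_nhds (by rw [hBdef]; linarith))
  have hGM : ∀ᶠ j in atTop, G (φ j) ≤ M := by
    filter_upwards [hEf] with j hj
    have h1 : qx (φ j) ≤ Φ 0 := le_trans (hqxΦ _) (hΦmono (Nat.zero_le _))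
    have h2 := hqxG (φ j)
    rw [hMdef]
    linarith
  have hEγ : ∀ᶠ j in atTop, γ (φ j) ≤ Γ := by
    filter_upwards [hEball, hGM, hEg] with j h1 h2 h3
    exact hkey _ h1 h2 h3
  -- g xbar is finite
  have hgxbar_top : g xbar ≠ ⊤ := by
    intro htop
    have h1 : ((M : ℝ) : EReal) < g xbar := by rw [htop]; exact EReal.coe_lt_top M
    have h2 := hconv.eventually (hg_lsc xbar _ h1)
    obtain ⟨j, hj1, hj2⟩ := (h2.and hGM).exists
    rw [← hG (φ j)] at hj1
    exact absurd (EReal.coe_lt_coe_iff.mp hj1) (not_lt.mpr hj2)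
  obtain ⟨gb, hgbdef⟩ : ∃ gb : ℝ, gb = (g xbar).toReal := ⟨_, rfl⟩
  have hgb : ((gb : ℝ) : EReal) = g xbar := hgbdef ▸ EReal.coe_toReal hgxbar_top (hgbot xbar)
  -- upper bound on G (φ j + 1)
  have hup : ∀ᶠ j in atTop, G (φ j + 1)
      ≤ gb + (B * (‖xbar - x (φ j)‖ + ‖x (φ j + 1) - x (φ j)‖)
          + Γ / 2 * ‖xbar - x (φ j)‖ ^ 2) := by
    filter_upwards [hEγ, hEg] with j h1 h2
    have h3 := hstep (φ j) xbar
    rw [← hG (φ j + 1), ← hgb, ← EReal.coe_add, ← EReal.coe_add, EReal.coe_le_coe_iff] at h3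
    have hip1 : ⟪gradient f (x (φ j)), xbar - x (φ j)⟫ ≤ B * ‖xbar - x (φ j)‖ := by
      have ha := real_inner_le_norm (gradient f (x (φ j))) (xbar - x (φ j))
      have hb2 : ‖gradient f (x (φ j))‖ * ‖xbar - x (φ j)‖ ≤ B * ‖xbar - x (φ j)‖ :=
        mul_le_mul_of_nonneg_right h2 (norm_nonneg _)
      linarith
    have hip2 : -(B * ‖x (φ j + 1) - x (φ j)‖)
        ≤ ⟪gradient f (x (φ j)), x (φ j + 1) - x (φ j)⟫ := by
      have ha := abs_real_inner_le_norm (gradient f (x (φ j))) (x (φ j + 1) - x (φ j))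
      have hb2 : ‖gradient f (x (φ j))‖ * ‖x (φ j + 1) - x (φ j)‖
          ≤ B * ‖x (φ j + 1) - x (φ j)‖ :=
        mul_le_mul_of_nonneg_right h2 (norm_nonneg _)
      have hc := neg_abs_le ⟪gradient f (x (φ j)), x (φ j + 1) - x (φ j)⟫
      linarith
    have hγ2 : γ (φ j) / 2 * ‖xbar - x (φ j)‖ ^ 2 ≤ Γ / 2 * ‖xbar - x (φ j)‖ ^ 2 :=
      mul_le_mul_of_nonneg_right (by linarith) (sq_nonneg _)
    have hγΔ2 : 0 ≤ γ (φ j) / 2 * ‖x (φ j + 1) - x (φ j)‖ ^ 2 := by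
      have := hγpos (φ j); positivity
    linarith
  have hεt : Tendsto (fun j => B * (‖xbar - x (φ j)‖ + ‖x (φ j + 1) - x (φ j)‖)
      + Γ / 2 * ‖xbar - x (φ j)‖ ^ 2) atTop (𝓝 0) := by
    have t1 : Tendsto (fun j => ‖xbar - x (φ j)‖) atTop (𝓝 0) := by
      have h1 : Tendsto (fun j => xbar - x (φ j)) atTop (𝓝 0) := by
        simpa using (tendsto_const_nhds (x := xbar)).sub hconv
      simpa using h1.norm
    have t2 : Tendsto (fun j => ‖x (φ j + 1) - x (φ j)‖) atTop (𝓝 0) := hΔ0.comp hφtop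
    have t3 := ((t1.add t2).const_mul B).add ((t1.pow 2).const_mul (Γ / 2))
    simpa using t3
  have hGconv : Tendsto (fun j => G (φ j + 1)) atTop (𝓝 gb) := by
    rw [tendsto_order]
    constructor
    · intro a ha
      have h1 : ((a : ℝ) : EReal) < g xbar := by
        rw [← hgb]; exact_mod_cast ha
      filter_upwards [hconv1.eventually (hg_lsc xbar _ h1)] with j hj
      rw [← hG (φ j + 1)] at hj
      exact EReal.coe_lt_coe_iff.mp hj
    · intro a ha
      filter_upwards [hup, hεt.eventually (eventually_lt_nhds (by linarith : (0:ℝ) < a - gb))]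
        with j h1 h2
      linarith
  refine ⟨?_, hgxbar_top⟩
  have h1 : Tendsto (fun j => ((G (φ j + 1) : ℝ) : EReal)) atTop (𝓝 ((gb : ℝ) : EReal)) :=
    EReal.tendsto_coe.mpr hGconv
  rw [hgb] at h1
  exact h1.congr fun j => hG (φ j + 1)
end

section
/- Let x̄ be an accumulation point of the iterate sequence (x^k), let ρ > 0, let L ≥ 0 be a Lipschitz constant of ∇f on the closed ball B_ρ(x̄), and let γ̄ > 0 satisfy γ_k ≤ γ̄ for all k with x^k ∈ B_ρ(x̄). Then for every k ∈ ℕ such that both x^k ∈ B_ρ(x̄) and x^{k+1} ∈ B_ρ(x̄), one has dist(0, ∂q(x^{k+1})) ≤ (γ̄ + L)‖x^{k+1} − x^k‖. -/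
open Filter Topology Set Metric Pointwise RealInnerProductSpace

/-- The Fréchet (regular) subdifferential of an extended-real-valued function. -/
noncomputable def frechetSubdiff {X : Type*} [NormedAddCommGroup X] [InnerProductSpace ℝ X]
    (q : X → EReal) (x : X) : Set X :=
  {v | 0 ≤ Filter.liminf
      (fun y => (q y - q x - ((⟪v, y - x⟫ : ℝ) : EReal)) / ((‖y - x‖ : ℝ) : EReal))
      (nhdsWithin x {x}ᶜ)}

/-- The limiting (Mordukhovich) subdifferential of an extended-real-valued function. -/
noncomputable def limitingSubdiff {X : Type*} [NormedAddCommGroup X] [InnerProductSpace ℝ X]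
    (q : X → EReal) (x : X) : Set X :=
  {v | ∃ (xs : ℕ → X) (vs : ℕ → X),
      Filter.Tendsto xs Filter.atTop (nhds x) ∧
      Filter.Tendsto (fun j => q (xs j)) Filter.atTop (nhds (q x)) ∧
      Filter.Tendsto vs Filter.atTop (nhds v) ∧
      ∀ j, vs j ∈ frechetSubdiff q (xs j)}

theorem stmt10
    {X : Type*} [NormedAddCommGroup X] [InnerProductSpace ℝ X] [FiniteDimensional ℝ X]
    (f : X → ℝ) (g : X → EReal)
    (hf : ContDiff ℝ 1 f)
    (hg_lsc : LowerSemicontinuous g)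
    (hg_proper : ∃ y, g y ≠ ⊤)
    (hq_bddbelow : ∃ c : ℝ, ∀ y, g y ≠ ⊤ → (c : EReal) ≤ (f y : EReal) + g y)
    (hg_affine : ∃ (b : X) (c : ℝ), ∀ y, ((⟪b, y⟫ + c : ℝ) : EReal) ≤ g y)
    (hgrad_lip : LocallyLipschitz (fun y => gradient f y))
    (τ γmin γmax δ pmin : ℝ)
    (hτ : 1 < τ) (hγmin : 0 < γmin) (hγminmax : γmin ≤ γmax)
    (hδ : δ ∈ Set.Ioo (0:ℝ) 1) (hpmin : 4/5 ≤ pmin) (hpmin1 : pmin ≤ 1)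
    (p : ℕ → ℝ) (hp : ∀ k, p k ∈ Set.Icc pmin 1)
    (x : ℕ → X) (γ : ℕ → ℝ) (Φ : ℕ → ℝ) (qx : ℕ → ℝ)
    (hdom : ∀ k, g (x k) ≠ ⊤)
    (hqx : ∀ k, (qx k : EReal) = (f (x k) : EReal) + g (x k))
    (hγlb : ∀ k, γmin ≤ γ k)
    (hΦ0 : Φ 0 = qx 0)
    (hΦrec : ∀ k, Φ (k + 1) = (1 - p k) * Φ k + p k * qx (k + 1))
    (hstep : ∀ k, ∀ y : X,
      ((f (x k) + ⟪gradient f (x k), x (k + 1) - x k⟫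
          + γ k / 2 * ‖x (k + 1) - x k‖ ^ 2 : ℝ) : EReal) + g (x (k + 1))
        ≤ ((f (x k) + ⟪gradient f (x k), y - x k⟫
          + γ k / 2 * ‖y - x k‖ ^ 2 : ℝ) : EReal) + g y)
    (haccept : ∀ k, qx (k + 1) ≤ Φ k - δ * γ k / 2 * ‖x (k + 1) - x k‖ ^ 2)
    (htrial : ∀ k, γmax < γ k → ∃ xh : X,
      (∀ y : X, ((f (x k) + ⟪gradient f (x k), xh - x k⟫
          + (γ k / τ) / 2 * ‖xh - x k‖ ^ 2 : ℝ) : EReal) + g xh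
        ≤ ((f (x k) + ⟪gradient f (x k), y - x k⟫
          + (γ k / τ) / 2 * ‖y - x k‖ ^ 2 : ℝ) : EReal) + g y)
      ∧ ((Φ k - δ * γ k / (2 * τ) * ‖xh - x k‖ ^ 2 : ℝ) : EReal) < (f xh : EReal) + g xh)
    (xbar : X) (hacc : MapClusterPt xbar Filter.atTop x)
    (ρ L γbar : ℝ) (hρ : 0 < ρ) (hL : 0 ≤ L)
    (hLip : LipschitzOnWith (Real.toNNReal L) (fun y => gradient f y) (Metric.closedBall xbar ρ))
    (hγbar : 0 < γbar) (hγb : ∀ k : ℕ, x k ∈ Metric.closedBall xbar ρ → γ k ≤ γbar) :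
    ∀ k : ℕ, x k ∈ Metric.closedBall xbar ρ → x (k + 1) ∈ Metric.closedBall xbar ρ →
      EMetric.infEdist (0 : X) (limitingSubdiff (fun y => (f y : EReal) + g y) (x (k + 1)))
        ≤ ENNReal.ofReal ((γbar + L) * ‖x (k + 1) - x k‖) := by
  
  intro k hk1 hk2
  obtain ⟨b, c, hbc⟩ := hg_affine
  have hgne : ∀ z : X, g z ≠ ⊥ := fun z h => by
    have h2 := hbc z
    rw [h] at h2
    exact (EReal.coe_ne_bot _) (le_bot_iff.mp h2)
  set a := x k with ha
  set u := x (k + 1) with hu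
  set γk := γ k with hγk
  set G := gradient f (x k) with hG
  set v : X := gradient f u - G - γk • (u - a) with hv
  have hγpos : 0 < γk := lt_of_lt_of_le hγmin (hγlb k)
  obtain ⟨gu, hgu⟩ : ∃ r : ℝ, g u = (r : EReal) :=
    ⟨(g u).toReal, (EReal.coe_toReal (hdom (k + 1)) (hgne u)).symm⟩
  -- differentiability facts
  have hfd : HasGradientAt f (gradient f u) u :=
    ((hf.differentiable one_ne_zero) u).hasGradientAt
  have hder : HasFDerivAt f (InnerProductSpace.toDual ℝ X (gradient f u)) u :=
    hfd.hasFDerivAt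
  have hlo : (fun y => f y - f u - ⟪gradient f u, y - u⟫) =o[𝓝 u] fun y => ‖y - u‖ := by
    have h1 := hder.isLittleO
    simpa [InnerProductSpace.toDual_apply_apply] using h1.norm_right
  have htend1 : Tendsto (fun y => (f y - f u - ⟪gradient f u, y - u⟫) / ‖y - u‖) (𝓝 u) (𝓝 0) :=
    hlo.tendsto_div_nhds_zero
  have htend2 : Tendsto (fun y : X => γk / 2 * ‖y - u‖) (𝓝 u) (𝓝 0) := by
    have h0 : Tendsto (fun y : X => ‖y - u‖) (𝓝 u) (𝓝 0) := by
      have h1 := ((continuous_id.sub (continuous_const : Continuous fun _ : X => u)).norm).tendsto u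
      simpa using h1
    simpa using h0.const_mul (γk / 2)
  set ψ : X → ℝ := fun y => (f y - f u - ⟪gradient f u, y - u⟫) / ‖y - u‖ - γk / 2 * ‖y - u‖
    with hψ
  have htendψ : Tendsto ψ (𝓝[{u}ᶜ] u) (𝓝 0) := by
    have h1 := (htend1.sub htend2).mono_left (nhdsWithin_le_nhds (s := {u}ᶜ))
    simpa only [sub_zero] using h1
  have hquEq : (f u : EReal) + g u = ((f u + gu : ℝ) : EReal) := by
    rw [hgu]; norm_cast
  -- the eventual inequality
  have hev : ∀ᶠ y in 𝓝[{u}ᶜ] u, ((ψ y : ℝ) : EReal) ≤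
      (((f y : EReal) + g y) - ((f u : EReal) + g u) - ((⟪v, y - u⟫ : ℝ) : EReal)) /
        ((‖y - u‖ : ℝ) : EReal) := by
    filter_upwards [self_mem_nhdsWithin] with y hy
    have hyne : y ≠ u := hy
    have hnorm_pos : (0 : ℝ) < ‖y - u‖ := by
      rwa [norm_pos_iff, sub_ne_zero]
    by_cases hgy : g y = ⊤
    · rw [hgy, hquEq, EReal.coe_add_top, EReal.top_sub_coe, EReal.top_sub_coe,
        EReal.top_div_of_pos_ne_top (by exact_mod_cast hnorm_pos) (EReal.coe_ne_top _)]
      exact le_top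
    · obtain ⟨gy, hgyE⟩ : ∃ r : ℝ, g y = (r : EReal) :=
        ⟨(g y).toReal, (EReal.coe_toReal hgy (hgne y)).symm⟩
      have hs := hstep k y
      rw [hgu, hgyE] at hs
      have hsR : f a + ⟪G, u - a⟫ + γk / 2 * ‖u - a‖ ^ 2 + gu ≤
          f a + ⟪G, y - a⟫ + γk / 2 * ‖y - a‖ ^ 2 + gy := by exact_mod_cast hs
      have hya : y - a = (y - u) + (u - a) := by abel
      have hexp : ‖y - a‖ ^ 2 = ‖y - u‖ ^ 2 + 2 * ⟪y - u, u - a⟫ + ‖u - a‖ ^ 2 := by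
        rw [hya]; exact norm_add_sq_real _ _
      have hGya : ⟪G, y - a⟫ = ⟪G, y - u⟫ + ⟪G, u - a⟫ := by
        rw [hya, inner_add_right]
      have hvin : ⟪v, y - u⟫ = ⟪gradient f u, y - u⟫ - ⟪G, y - u⟫ - γk * ⟪u - a, y - u⟫ := by
        simp [hv, inner_sub_left, real_inner_smul_left]
      have hcomm : ⟪y - u, u - a⟫ = ⟪u - a, y - u⟫ := real_inner_comm _ _
      have hid : ((f y + gy) - (f u + gu) - ⟪v, y - u⟫) -
          (f y - f u - ⟪gradient f u, y - u⟫ - γk / 2 * ‖y - u‖ ^ 2) =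
          (f a + ⟪G, y - a⟫ + γk / 2 * ‖y - a‖ ^ 2 + gy) -
          (f a + ⟪G, u - a⟫ + γk / 2 * ‖u - a‖ ^ 2 + gu) := by
        rw [hvin, hGya, hexp, hcomm]; ring
      have hkey : f y - f u - ⟪gradient f u, y - u⟫ - γk / 2 * ‖y - u‖ ^ 2 ≤
          (f y + gy) - (f u + gu) - ⟪v, y - u⟫ := by linarith [hsR, hid]
      have hψy : ψ y = (f y - f u - ⟪gradient f u, y - u⟫ - γk / 2 * ‖y - u‖ ^ 2) / ‖y - u‖ := by
        rw [hψ]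
        field_simp
      rw [hgyE, hquEq,
        show ((f y : EReal) + ((gy : ℝ) : EReal)) = (((f y + gy : ℝ)) : EReal) by norm_cast,
        show (((f y + gy : ℝ)) : EReal) - ((f u + gu : ℝ) : EReal) - ((⟪v, y - u⟫ : ℝ) : EReal)
          = ((((f y + gy) - (f u + gu) - ⟪v, y - u⟫ : ℝ)) : EReal) by norm_cast,
        ← EReal.coe_div, EReal.coe_le_coe_iff, hψy]
      exact (div_le_div_iff_of_pos_right hnorm_pos).mpr hkey
  -- Fréchet subdifferential membership
  have hvF : v ∈ frechetSubdiff (fun y => (f y : EReal) + g y) u := by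
    simp only [frechetSubdiff, Set.mem_setOf_eq]
    by_cases hbot : (𝓝[{u}ᶜ] u) = ⊥
    · rw [hbot]
      simp
    · haveI : (𝓝[{u}ᶜ] u).NeBot := ⟨hbot⟩
      have hcoe : Tendsto (fun y => ((ψ y : ℝ) : EReal)) (𝓝[{u}ᶜ] u) (𝓝 ((0 : ℝ) : EReal)) :=
        EReal.tendsto_coe.mpr htendψ
      have h0 : Filter.liminf (fun y => ((ψ y : ℝ) : EReal)) (𝓝[{u}ᶜ] u) = (0 : EReal) := by
        rw [hcoe.liminf_eq]; exact EReal.coe_zero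
      rw [← h0]
      exact Filter.liminf_le_liminf hev
  have hvL : v ∈ limitingSubdiff (fun y => (f y : EReal) + g y) u :=
    ⟨fun _ => u, fun _ => v, tendsto_const_nhds, tendsto_const_nhds, tendsto_const_nhds,
      fun _ => hvF⟩
  -- norm bound
  have h1 : ‖gradient f u - G‖ ≤ L * ‖u - a‖ := by
    have h2 := hLip.dist_le_mul u hk2 a hk1
    rw [dist_eq_norm, dist_eq_norm] at h2
    simpa [Real.coe_toNNReal L hL] using h2
  have h2 : ‖γk • (u - a)‖ = γk * ‖u - a‖ := by
    rw [norm_smul, Real.norm_eq_abs, abs_of_pos hγpos]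
  have h3 : ‖v‖ ≤ ‖gradient f u - G‖ + ‖γk • (u - a)‖ := norm_sub_le _ _
  have hγb' : γk ≤ γbar := hγb k hk1
  have hmul : γk * ‖u - a‖ ≤ γbar * ‖u - a‖ :=
    mul_le_mul_of_nonneg_right hγb' (norm_nonneg _)
  have hnv : ‖v‖ ≤ (γbar + L) * ‖u - a‖ := by nlinarith [h1, h2, h3, hmul]
  calc EMetric.infEdist (0 : X) (limitingSubdiff (fun y => (f y : EReal) + g y) u)
      ≤ edist (0 : X) v := EMetric.infEdist_le_edist_of_mem hvL
    _ = ENNReal.ofReal ‖v‖ := by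
        rw [edist_comm, edist_zero_right, ← ofReal_norm]
    _ ≤ ENNReal.ofReal ((γbar + L) * ‖u - a‖) := ENNReal.ofReal_le_ofReal hnv
end

section
/- The sequence (q(x^{l(k)})) is monotonically nonincreasing, and all iterates x^k as well as all points x^{l(k)} lie in the sublevel set L_q(x^0) := {x ∈ dom q : q(x) ≤ q(x^0)}, which is contained in dom g. -/
open Filter Topology Set Metric Pointwise RealInnerProductSpace

theorem stmt13
    {X : Type*} [NormedAddCommGroup X] [InnerProductSpace ℝ X] [FiniteDimensional ℝ X]
    (f : X → ℝ) (g : X → EReal)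
    (hf : ContDiff ℝ 1 f)
    (hg_lsc : LowerSemicontinuous g)
    (hg_proper : ∃ y, g y ≠ ⊤)
    (hq_bddbelow : ∃ c : ℝ, ∀ y, g y ≠ ⊤ → (c : EReal) ≤ (f y : EReal) + g y)
    (hg_affine : ∃ (b : X) (c : ℝ), ∀ y, ((⟪b, y⟫ + c : ℝ) : EReal) ≤ g y)
    (hgrad_lip : LocallyLipschitz (fun y => gradient f y))
    (hq_cont : ContinuousOn (fun y => (f y : EReal) + g y) {y | g y ≠ ⊤})
    (τ γmin γmax δ : ℝ) (m : ℕ)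
    (hτ : 1 < τ) (hγmin : 0 < γmin) (hγminmax : γmin ≤ γmax)
    (hδ : δ ∈ Set.Ioo (0:ℝ) 1)
    (x : ℕ → X) (γ : ℕ → ℝ) (qx : ℕ → ℝ) (l : ℕ → ℕ)
    (hdom : ∀ k, g (x k) ≠ ⊤)
    (hqx : ∀ k, (qx k : EReal) = (f (x k) : EReal) + g (x k))
    (hγlb : ∀ k, γmin ≤ γ k)
    (hl : ∀ k, k - min k m ≤ l k ∧ l k ≤ k ∧ ∀ j ≤ min k m, qx (k - j) ≤ qx (l k))
    (hstep : ∀ k, ∀ y : X,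
      ((f (x k) + ⟪gradient f (x k), x (k + 1) - x k⟫
          + γ k / 2 * ‖x (k + 1) - x k‖ ^ 2 : ℝ) : EReal) + g (x (k + 1))
        ≤ ((f (x k) + ⟪gradient f (x k), y - x k⟫
          + γ k / 2 * ‖y - x k‖ ^ 2 : ℝ) : EReal) + g y)
    (haccept : ∀ k, qx (k + 1) ≤ qx (l k) - δ * γ k / 2 * ‖x (k + 1) - x k‖ ^ 2)
    (htrial : ∀ k, γmax < γ k → ∃ xh : X,
      (∀ y : X, ((f (x k) + ⟪gradient f (x k), xh - x k⟫
          + (γ k / τ) / 2 * ‖xh - x k‖ ^ 2 : ℝ) : EReal) + g xh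
        ≤ ((f (x k) + ⟪gradient f (x k), y - x k⟫
          + (γ k / τ) / 2 * ‖y - x k‖ ^ 2 : ℝ) : EReal) + g y)
      ∧ ((qx (l k) - δ * γ k / (2 * τ) * ‖xh - x k‖ ^ 2 : ℝ) : EReal) < (f xh : EReal) + g xh) :
    (∀ k : ℕ, qx (l (k + 1)) ≤ qx (l k))
    ∧ (∀ k : ℕ, x k ∈ {y : X | (f y : EReal) + g y ≤ ((qx 0 : ℝ) : EReal)})
    ∧ (∀ k : ℕ, x (l k) ∈ {y : X | (f y : EReal) + g y ≤ ((qx 0 : ℝ) : EReal)})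
    ∧ {y : X | (f y : EReal) + g y ≤ ((qx 0 : ℝ) : EReal)} ⊆ {y : X | g y ≠ ⊤} := by
  have hacc : ∀ k, qx (k + 1) ≤ qx (l k) := by
    intro k
    have h := haccept k
    have hγ : 0 < γ k := lt_of_lt_of_le hγmin (hγlb k)
    have h0 : 0 ≤ δ * γ k / 2 * ‖x (k + 1) - x k‖ ^ 2 :=
      mul_nonneg (div_nonneg (mul_nonneg hδ.1.le hγ.le) (by norm_num)) (sq_nonneg _)
    linarith
  have mono : ∀ k : ℕ, qx (l (k + 1)) ≤ qx (l k) := by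
    intro k
    obtain ⟨h1, h2, h3⟩ := hl (k + 1)
    rcases eq_or_lt_of_le h2 with heq | hlt
    · rw [heq]; exact hacc k
    · have hj : k - l (k + 1) ≤ min k m := by omega
      have := (hl k).2.2 (k - l (k + 1)) hj
      have hkk : k - (k - l (k + 1)) = l (k + 1) := by omega
      rwa [hkk] at this
  have hl0 : l 0 = 0 := by have := hl 0; omega
  have hmono0 : ∀ k, qx (l k) ≤ qx 0 := by
    intro k
    induction k with
    | zero => rw [hl0]
    | succ n ih => exact (mono n).trans ih
  have hk0 : ∀ k, qx k ≤ qx 0 := by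
    intro k
    cases k with
    | zero => exact le_refl _
    | succ n => exact (hacc n).trans (hmono0 n)
  have hmem : ∀ k, x k ∈ {y : X | (f y : EReal) + g y ≤ ((qx 0 : ℝ) : EReal)} := by
    intro k
    show (f (x k) : EReal) + g (x k) ≤ ((qx 0 : ℝ) : EReal)
    rw [← hqx k]
    exact_mod_cast hk0 k
  refine ⟨mono, hmem, fun k => hmem (l k), ?_⟩
  intro y hy hgy
  rw [Set.mem_setOf_eq, hgy] at hy
  have : ((f y : EReal) + ⊤) = ⊤ := by
    simp
  rw [this] at hy
  exact (EReal.coe_lt_top (qx 0)).not_ge hy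
end

section
/- Let x̄ be an accumulation point of the iterates of the NPG method with max line search. Then for every ρ > 0 there exists a constant γ̄_ρ > 0 (depending on ρ) such that γ_k ≤ γ̄_ρ holds for every k ∈ ℕ with ‖x^k − x̄‖ ≤ ρ. -/
open Filter Topology Set Metric Pointwise RealInnerProductSpace

set_option maxHeartbeats 1000000

lemma lipOnBall {X Y : Type*} [NormedAddCommGroup X] [NormedSpace ℝ X]
    [FiniteDimensional ℝ X] [NormedAddCommGroup Y] {g : X → Y}
    (hg : LocallyLipschitz g) (c : X) (r : ℝ) :
    ∃ K : ℝ, 0 ≤ K ∧ ∀ p ∈ closedBall c r, ∀ q ∈ closedBall c r,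
      ‖g q - g p‖ ≤ K * ‖q - p‖ := by
  choose Kf t ht hlip using hg
  choose ε hε hball using fun z => Metric.mem_nhds_iff.1 (ht z)
  have hcompact : IsCompact (closedBall c r) := isCompact_closedBall c r
  obtain ⟨u, hu⟩ := hcompact.elim_finite_subcover (fun z : X => ball z (ε z))
    (fun z => isOpen_ball) (fun p hp => mem_iUnion.2 ⟨p, mem_ball_self (hε p)⟩)
  set K : NNReal := u.sup Kf with hK
  have hcov : closedBall c r ⊆ ⋃ i : u, ball (i : X) (ε i) := by
    intro p hp
    obtain ⟨z, hz, hzp⟩ := mem_iUnion₂.1 (hu hp)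
    exact mem_iUnion.2 ⟨⟨z, hz⟩, hzp⟩
  obtain ⟨δ, hδ0, hδ⟩ := lebesgue_number_lemma_of_metric hcompact
    (fun _ => isOpen_ball) hcov
  refine ⟨K, K.coe_nonneg, ?_⟩
  intro p hp q hq
  rcases eq_or_ne q p with rfl | hne
  · simp
  set n : ℕ := ⌈‖q - p‖ / δ⌉₊ + 1 with hn
  have hn0 : 0 < (n : ℝ) := by positivity
  have hlt : ‖q - p‖ / n < δ := by
    rw [div_lt_iff₀ hn0]
    have h1 : ‖q - p‖ / δ ≤ (⌈‖q - p‖ / δ⌉₊ : ℝ) := Nat.le_ceil _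
    have h2 : ((⌈‖q - p‖ / δ⌉₊ : ℝ)) < n := by exact_mod_cast Nat.lt_succ_self _
    have h3 := (div_lt_iff₀ hδ0).1 (lt_of_le_of_lt h1 h2)
    linarith [mul_comm (n : ℝ) δ, h3]
  set w : ℕ → X := fun j => p + ((j : ℝ) / n) • (q - p) with hw
  have hw0 : w 0 = p := by simp [hw]
  have hwn : w n = q := by
    simp only [hw]
    rw [div_self (ne_of_gt hn0), one_smul]
    abel
  have hwmem : ∀ j ≤ n, w j ∈ closedBall c r := by
    intro j hj
    have h0 : (0 : ℝ) ≤ (j : ℝ) / n := by positivity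
    have h1 : (j : ℝ) / n ≤ 1 := by
      rw [div_le_one hn0]; exact_mod_cast hj
    have := (convex_closedBall c r) hp hq (by linarith : (0:ℝ) ≤ 1 - (j:ℝ)/n) h0 (by ring)
    convert this using 1
    simp only [hw]
    module
  have hdj : ∀ j : ℕ, dist (w (j+1)) (w j) = ‖q - p‖ / n := by
    intro j
    have heq1 : w (j+1) - w j = ((1 : ℝ) / n) • (q - p) := by
      simp only [hw]
      push_cast
      module
    rw [dist_eq_norm, heq1, norm_smul, Real.norm_eq_abs,
      abs_of_pos (by positivity : (0:ℝ) < 1 / n)]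
    ring
  have hstep : ∀ j < n, dist (g (w j)) (g (w (j+1))) ≤ (K : ℝ) * (‖q - p‖ / n) := by
    intro j hj
    obtain ⟨i, hi⟩ := hδ (w j) (hwmem j hj.le)
    have h1 : w j ∈ t i := hball i (hi (mem_ball_self hδ0))
    have h2 : w (j+1) ∈ t i := hball i (hi (by rw [mem_ball, hdj j]; exact hlt))
    have h3 := (hlip i).dist_le_mul (w j) h1 (w (j+1)) h2
    have hKi : ((Kf i : NNReal) : ℝ) ≤ (K : ℝ) := by
      exact_mod_cast Finset.le_sup i.2
    calc dist (g (w j)) (g (w (j+1))) ≤ (Kf i : ℝ) * dist (w j) (w (j+1)) := h3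
    _ ≤ (K : ℝ) * (‖q - p‖ / n) := by
        rw [dist_comm, hdj j]
        apply mul_le_mul hKi le_rfl (by positivity) K.coe_nonneg
  have hchain := dist_le_range_sum_dist (fun j => g (w j)) n
  simp only [hw0, hwn] at hchain
  have hsum : ∑ j ∈ Finset.range n, dist (g (w j)) (g (w (j+1)))
      ≤ n * ((K : ℝ) * (‖q - p‖ / n)) := by
    calc ∑ j ∈ Finset.range n, dist (g (w j)) (g (w (j+1)))
        ≤ ∑ _j ∈ Finset.range n, (K : ℝ) * (‖q - p‖ / n) :=
          Finset.sum_le_sum (fun j hj => hstep j (Finset.mem_range.1 hj))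
    _ = n * ((K : ℝ) * (‖q - p‖ / n)) := by
        rw [Finset.sum_const, Finset.card_range, nsmul_eq_mul]
  have heq : (n : ℝ) * ((K : ℝ) * (‖q - p‖ / n)) = (K : ℝ) * ‖q - p‖ := by
    field_simp
  have : dist (g p) (g q) ≤ (K : ℝ) * ‖q - p‖ := by
    rw [← heq]; exact le_trans hchain hsum
  rw [← dist_eq_norm, dist_comm]
  exact this

lemma descentLemma {X : Type*} [NormedAddCommGroup X] [InnerProductSpace ℝ X]
    [CompleteSpace X] {f : X → ℝ} (hf : ContDiff ℝ 1 f) {K : ℝ} (hK0 : 0 ≤ K)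
    {c : X} {r : ℝ}
    (hK : ∀ p ∈ closedBall c r, ∀ q ∈ closedBall c r,
      ‖gradient f q - gradient f p‖ ≤ K * ‖q - p‖)
    {p q : X} (hp : p ∈ closedBall c r) (hq : q ∈ closedBall c r) :
    f q ≤ f p + ⟪gradient f p, q - p⟫ + K * ‖q - p‖ ^ 2 := by
  have hdiff : ∀ z, DifferentiableAt ℝ f z := fun z => hf.differentiable one_ne_zero z
  have hseg : segment ℝ p q ⊆ closedBall c r :=
    (convex_closedBall c r).segment_subset hp hq
  have hnorm : ∀ z, fderiv ℝ f z = InnerProductSpace.toDual ℝ X (gradient f z) := by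
    intro z
    simp [gradient]
  have hbound : ∀ z ∈ segment ℝ p q, ‖fderiv ℝ f z - fderiv ℝ f p‖ ≤ K * ‖q - p‖ := by
    intro z hz
    have h2 : ‖z - p‖ ≤ ‖q - p‖ := by
      obtain ⟨a, b, ha, hb, hab, rfl⟩ := hz
      have : a • p + b • q - p = b • (q - p) := by
        have ha' : a = 1 - b := by linarith
        rw [ha']; module
      rw [this, norm_smul, Real.norm_eq_abs, abs_of_nonneg hb]
      nlinarith [norm_nonneg (q - p)]
    have h1 : ‖gradient f z - gradient f p‖ ≤ K * ‖z - p‖ := hK p hp z (hseg hz)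
    have h3 : fderiv ℝ f z - fderiv ℝ f p
        = InnerProductSpace.toDual ℝ X (gradient f z - gradient f p) := by
      rw [map_sub, hnorm, hnorm]
    rw [h3, LinearIsometryEquiv.norm_map]
    calc ‖gradient f z - gradient f p‖ ≤ K * ‖z - p‖ := h1
    _ ≤ K * ‖q - p‖ := by nlinarith
  have hmvt := (convex_segment p q).norm_image_sub_le_of_norm_fderiv_le'
    (fun z _ => hdiff z) hbound (left_mem_segment ℝ p q) (right_mem_segment ℝ p q)
  have hφ : (fderiv ℝ f p) (q - p) = ⟪gradient f p, q - p⟫ := by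
    rw [hnorm, InnerProductSpace.toDual_apply_apply]
  rw [hφ, Real.norm_eq_abs] at hmvt
  have := abs_le.1 hmvt
  nlinarith [this.2, sq_nonneg ‖q - p‖]

theorem stmt16
    {X : Type*} [NormedAddCommGroup X] [InnerProductSpace ℝ X] [FiniteDimensional ℝ X]
    (f : X → ℝ) (g : X → EReal)
    (hf : ContDiff ℝ 1 f)
    (hg_lsc : LowerSemicontinuous g)
    (hg_proper : ∃ y, g y ≠ ⊤)
    (hq_bddbelow : ∃ c : ℝ, ∀ y, g y ≠ ⊤ → (c : EReal) ≤ (f y : EReal) + g y)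
    (hg_affine : ∃ (b : X) (c : ℝ), ∀ y, ((⟪b, y⟫ + c : ℝ) : EReal) ≤ g y)
    (hgrad_lip : LocallyLipschitz (fun y => gradient f y))
    (hq_cont : ContinuousOn (fun y => (f y : EReal) + g y) {y | g y ≠ ⊤})
    (τ γmin γmax δ : ℝ) (m : ℕ)
    (hτ : 1 < τ) (hγmin : 0 < γmin) (hγminmax : γmin ≤ γmax)
    (hδ : δ ∈ Set.Ioo (0:ℝ) 1)
    (x : ℕ → X) (γ : ℕ → ℝ) (qx : ℕ → ℝ) (l : ℕ → ℕ)
    (hdom : ∀ k, g (x k) ≠ ⊤)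
    (hqx : ∀ k, (qx k : EReal) = (f (x k) : EReal) + g (x k))
    (hγlb : ∀ k, γmin ≤ γ k)
    (hl : ∀ k, k - min k m ≤ l k ∧ l k ≤ k ∧ ∀ j ≤ min k m, qx (k - j) ≤ qx (l k))
    (hstep : ∀ k, ∀ y : X,
      ((f (x k) + ⟪gradient f (x k), x (k + 1) - x k⟫
          + γ k / 2 * ‖x (k + 1) - x k‖ ^ 2 : ℝ) : EReal) + g (x (k + 1))
        ≤ ((f (x k) + ⟪gradient f (x k), y - x k⟫
          + γ k / 2 * ‖y - x k‖ ^ 2 : ℝ) : EReal) + g y)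
    (haccept : ∀ k, qx (k + 1) ≤ qx (l k) - δ * γ k / 2 * ‖x (k + 1) - x k‖ ^ 2)
    (htrial : ∀ k, γmax < γ k → ∃ xh : X,
      (∀ y : X, ((f (x k) + ⟪gradient f (x k), xh - x k⟫
          + (γ k / τ) / 2 * ‖xh - x k‖ ^ 2 : ℝ) : EReal) + g xh
        ≤ ((f (x k) + ⟪gradient f (x k), y - x k⟫
          + (γ k / τ) / 2 * ‖y - x k‖ ^ 2 : ℝ) : EReal) + g y)
      ∧ ((qx (l k) - δ * γ k / (2 * τ) * ‖xh - x k‖ ^ 2 : ℝ) : EReal) < (f xh : EReal) + g xh)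
    (xbar : X) (hacc : MapClusterPt xbar Filter.atTop x) :
    ∀ ρ > (0:ℝ), ∃ γbar > (0:ℝ), ∀ k : ℕ, ‖x k - xbar‖ ≤ ρ → γ k ≤ γbar := by
  intro ρ hρ
  obtain ⟨b, c, haff⟩ := hg_affine
  have hτ0 : (0:ℝ) < τ := lt_trans one_pos hτ
  have h1δ : (0:ℝ) < 1 - δ := by linarith [hδ.2]
  have hgbot : ∀ y, g y ≠ ⊥ := fun y =>
    ne_of_gt (lt_of_lt_of_le (EReal.bot_lt_coe _) (haff y))
  have hgreal : ∀ y, g y ≠ ⊤ → g y = ((g y).toReal : EReal) := fun y hy =>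
    (EReal.coe_toReal hy (hgbot y)).symm
  have hqx' : ∀ k, qx k = f (x k) + (g (x k)).toReal := by
    intro k
    have h := hqx k
    rw [hgreal _ (hdom k), ← EReal.coe_add] at h
    exact_mod_cast h
  -- bound on gradient over the ball
  obtain ⟨Mf0, hMf0⟩ := (isCompact_closedBall xbar ρ).exists_bound_of_continuousOn
    (hgrad_lip.continuous.continuousOn)
  obtain ⟨Mf, hMfnn, hMf⟩ : ∃ Mf, 0 ≤ Mf ∧ ∀ z ∈ closedBall xbar ρ, ‖gradient f z‖ ≤ Mf :=
    ⟨max Mf0 0, le_max_right _ _, fun z hz => le_trans (hMf0 z hz) (le_max_left _ _)⟩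
  -- bound on f over the ball
  obtain ⟨Cf, hCf⟩ := (isCompact_closedBall xbar ρ).exists_bound_of_continuousOn
    (hf.continuous.continuousOn)
  have hflb : ∀ z ∈ closedBall xbar ρ, -Cf ≤ f z := by
    intro z hz
    have := hCf z hz
    rw [Real.norm_eq_abs] at this
    linarith [abs_le.1 this |>.1]
  -- monotone bound on qx
  have hqmono : ∀ k, qx k ≤ qx 0 := by
    intro k
    induction k using Nat.strong_induction_on with
    | _ k ih =>
      cases k with
      | zero => exact le_rfl
      | succ k =>
        have h1 := haccept k
        have h2 : qx (l k) ≤ qx 0 := ih (l k) (Nat.lt_succ_of_le (hl k).2.1)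
        have hγk : (0:ℝ) < γ k := lt_of_lt_of_le hγmin (hγlb k)
        have h3 : 0 ≤ δ * γ k / 2 * ‖x (k+1) - x k‖^2 :=
          mul_nonneg (div_nonneg (mul_nonneg hδ.1.le hγk.le) (by norm_num)) (sq_nonneg _)
        linarith
  obtain ⟨a, hadef, ha⟩ : ∃ a : ℝ, a = γmin / (2 * τ) ∧ 0 < a := ⟨_, rfl, by positivity⟩
  obtain ⟨A, hAdef, hA⟩ : ∃ A : ℝ, A = Mf + ‖b‖ ∧ 0 ≤ A :=
    ⟨_, rfl, add_nonneg hMfnn (norm_nonneg _)⟩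
  obtain ⟨B, hB, hB2⟩ : ∃ B : ℝ, 0 ≤ B ∧ qx 0 + Cf + ‖b‖ * (‖xbar‖ + ρ) - c ≤ B :=
    ⟨max 0 _, le_max_left _ _, le_max_right _ _⟩
  obtain ⟨R, hR1, hRge⟩ : ∃ R : ℝ, 1 ≤ R ∧ (A + B) / a ≤ R :=
    ⟨max 1 _, le_max_left _ _, le_max_right _ _⟩
  obtain ⟨K, hK0, hK⟩ := lipOnBall hgrad_lip xbar (ρ + R)
  have hγmax0 : (0:ℝ) < γmax := lt_of_lt_of_le hγmin hγminmax
  refine ⟨max γmax (2 * τ * K / (1 - δ)) + 1, by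
    linarith [le_max_left γmax (2 * τ * K / (1 - δ))], ?_⟩
  intro k hxk
  by_cases hcase : γ k ≤ γmax
  · linarith [le_max_left γmax (2 * τ * K / (1 - δ))]
  push_neg at hcase
  obtain ⟨xh, hmin, hfail⟩ := htrial k hcase
  have hxkball : x k ∈ closedBall xbar ρ := by
    rw [mem_closedBall, dist_eq_norm]; exact hxk
  -- realify the minimization inequality at y = x k
  have hmin' := hmin (x k)
  rw [show (f (x k) + ⟪gradient f (x k), x k - x k⟫
      + γ k / τ / 2 * ‖x k - x k‖ ^ 2 : ℝ) = f (x k) from by simp] at hmin'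
  -- hmin' : ((f (x k) + ⟪...⟫ + (γ k / τ)/2 * ‖xh - x k‖^2 : ℝ) : EReal) + g xh
  --         ≤ (f (x k) : EReal) + g (x k)
  have hghtop : g xh ≠ ⊤ := by
    intro htop
    rw [htop, EReal.coe_add_top, hgreal _ (hdom k), ← EReal.coe_add] at hmin'
    exact (EReal.coe_ne_top _) (top_le_iff.1 hmin')
  have hminR : f (x k) + ⟪gradient f (x k), xh - x k⟫
      + (γ k / τ) / 2 * ‖xh - x k‖ ^ 2 + (g xh).toReal
      ≤ f (x k) + (g (x k)).toReal := by
    rw [hgreal _ hghtop, hgreal _ (hdom k), ← EReal.coe_add, ← EReal.coe_add] at hmin'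
    exact_mod_cast hmin'
  have haffh : ⟪b, xh⟫ + c ≤ (g xh).toReal := by
    have h := haff xh
    rw [hgreal _ hghtop] at h
    exact_mod_cast h
  have hinner : -(Mf * ‖xh - x k‖) ≤ ⟪gradient f (x k), xh - x k⟫ := by
    have h1 := abs_real_inner_le_norm (gradient f (x k)) (xh - x k)
    have h2 := hMf (x k) hxkball
    nlinarith [abs_le.1 h1 |>.1, norm_nonneg (xh - x k)]
  have hbxh : -(‖b‖ * (‖xbar‖ + ρ) + ‖b‖ * ‖xh - x k‖) ≤ ⟪b, xh⟫ := by
    have h1 : ⟪b, xh⟫ = ⟪b, x k⟫ + ⟪b, xh - x k⟫ := by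
      rw [← inner_add_right]
      congr 1
      abel
    have h2 := abs_real_inner_le_norm b (x k)
    have h3 := abs_real_inner_le_norm b (xh - x k)
    have h4 : ‖x k‖ ≤ ‖xbar‖ + ρ := by
      have := norm_sub_norm_le (x k) xbar
      linarith
    have h5 : ‖b‖ * ‖x k‖ ≤ ‖b‖ * (‖xbar‖ + ρ) :=
      mul_le_mul_of_nonneg_left h4 (norm_nonneg b)
    nlinarith [abs_le.1 h2 |>.1, abs_le.1 h3 |>.1]
  have hgk_le : (g (x k)).toReal ≤ qx 0 + Cf := by
    have h1 := hqx' k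
    have h2 := hqmono k
    have h3 := hflb (x k) hxkball
    linarith
  -- the trial point stays within distance R
  have hdR : ‖xh - x k‖ ≤ R := by
    by_contra hcon
    push_neg at hcon
    have hd1 : 1 < ‖xh - x k‖ := lt_of_le_of_lt hR1 hcon
    have hγτ : a ≤ (γ k / τ) / 2 := by
      rw [hadef, div_div, mul_comm τ 2]
      gcongr
      linarith
    have h5 := mul_le_mul_of_nonneg_right hγτ (sq_nonneg ‖xh - x k‖)
    have key : a * ‖xh - x k‖ ^ 2 ≤ A * ‖xh - x k‖ + B := by
      have haffh2 : -(‖b‖ * (‖xbar‖ + ρ) + ‖b‖ * ‖xh - x k‖) + c ≤ (g xh).toReal := by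
        linarith
      rw [hAdef]
      linarith [hminR, hinner, haffh2, hgk_le, h5]
    have h6 : (A + B) / a < ‖xh - x k‖ := lt_of_le_of_lt hRge hcon
    have h7 : a * ((A + B) / a) = A + B := by field_simp
    have h8 : A + B < a * ‖xh - x k‖ := by
      have := mul_lt_mul_of_pos_left h6 ha
      rwa [h7] at this
    have h9 : a * ‖xh - x k‖ ^ 2 ≤ (A + B) * ‖xh - x k‖ := by
      nlinarith [key, hd1, hB]
    have h10 : a * ‖xh - x k‖ ≤ A + B := by
      have hd0 : (0:ℝ) < ‖xh - x k‖ := by linarith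
      nlinarith [h9, hd0]
    linarith
  -- memberships in the bigger ball
  have hxkT : x k ∈ closedBall xbar (ρ + R) := by
    rw [mem_closedBall, dist_eq_norm]
    linarith
  have hxhT : xh ∈ closedBall xbar (ρ + R) := by
    rw [mem_closedBall, dist_eq_norm]
    have h1 := norm_add_le (xh - x k) (x k - xbar)
    rw [sub_add_sub_cancel] at h1
    linarith
  have hdesc := descentLemma hf hK0 hK hxkT hxhT
  -- realify the failure of the trial acceptance test
  have hfailR : qx (l k) - δ * γ k / (2 * τ) * ‖xh - x k‖ ^ 2
      < f xh + (g xh).toReal := by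
    rw [hgreal _ hghtop, ← EReal.coe_add] at hfail
    exact_mod_cast hfail
  have hqlk : qx k ≤ qx (l k) := by
    have := (hl k).2.2 0 (Nat.zero_le _)
    simpa using this
  have hqxk := hqx' k
  rcases eq_or_lt_of_le (norm_nonneg (xh - x k)) with hd0 | hd0
  · -- xh = x k : contradiction with the strict failure inequality
    have hxh : xh = x k := by
      rw [← sub_eq_zero]
      exact norm_eq_zero.1 hd0.symm
    rw [← hd0] at hfailR
    norm_num at hfailR
    rw [hxh] at hfailR
    linarith
  · -- combine everything
    have hd2 : (0:ℝ) < ‖xh - x k‖ ^ 2 := by positivity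
    set β : ℝ := γ k / (2 * τ) with hβdef
    have hco1 : (γ k / τ) / 2 = β := by
      rw [hβdef, div_div, mul_comm τ 2]
    have hco2 : δ * γ k / (2 * τ) = δ * β := by
      rw [hβdef, mul_div_assoc]
    have hstep2 : β * (1 - δ) * ‖xh - x k‖ ^ 2 < K * ‖xh - x k‖ ^ 2 := by
      rw [hco1] at hminR
      rw [hco2] at hfailR
      linarith [hfailR, hdesc, hminR, hqlk, hqxk]
    have hβlt : β * (1 - δ) < K := lt_of_mul_lt_mul_right hstep2 hd2.le
    have hβlt2 : β < K / (1 - δ) := (lt_div_iff₀ h1δ).2 hβlt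
    have hγeq : γ k = β * (2 * τ) := by
      rw [hβdef, div_mul_cancel₀]
      positivity
    have hfin : γ k < 2 * τ * K / (1 - δ) := by
      rw [hγeq]
      calc β * (2 * τ) < (K / (1 - δ)) * (2 * τ) :=
        mul_lt_mul_of_pos_right hβlt2 (by positivity)
      _ = 2 * τ * K / (1 - δ) := by ring
    linarith [le_max_right γmax (2 * τ * K / (1 - δ))]
end
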